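/- arXiv:1012.2718 — 3 statements merged into one kernel-verified Lean document; each statement's English description precedes it below -/
import Mathlib

section
/- Under the stated assumptions on F, the one-dimensional ODE m′(x) = √(2F(m(x))) with boundary conditions m(±∞) = ±1 has a unique solution m satisfying m(0) = 0, and every solution of this boundary value problem is a translate x ↦ m(x − ξ) of m for some ξ ∈ ℝ. -/
open MeasureTheory Real Filter Topology
open scoped ENNReal RealInnerProductSpace

noncomputable section

/-- `Eucl d` is the Euclidean space `ℝ^(d+1)`. -/
abbrev Eucl (d : ℕ) : Type := EuclideanSpace ℝ (Fin (d + 1))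

/-- The unbounded domain `D = ℝ × (0,1)^d`, as a subset of `ℝ^(d+1)`. -/
def domD (d : ℕ) : Set (Eucl d) := {z | ∀ i : Fin d, z i.succ ∈ Set.Ioo (0 : ℝ) 1}

/-- The bounded domain `D_L = (-L,L) × (0,1)^d`. -/
def domDL (d : ℕ) (L : ℝ) : Set (Eucl d) :=
  {z | |z 0| < L ∧ ∀ i : Fin d, z i.succ ∈ Set.Ioo (0 : ℝ) 1}

/-- The standing assumptions on the symmetric double well potential `F`. -/
structure IsStdPotential (F : ℝ → ℝ) : Prop where
  smooth : ContDiff ℝ 3 F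
  symm : ∀ u, F (-u) = F u
  nonneg : ∀ u, 0 ≤ F u
  zero_iff : ∀ u, F u = 0 ↔ u = 1 ∨ u = -1
  deriv_zero_iff : ∀ u, deriv F u = 0 ↔ u = 0 ∨ u = 1 ∨ u = -1
  dd_zero_neg : deriv (deriv F) 0 < 0
  dd_one_pos : 0 < deriv (deriv F) 1
  dd_neg_one_pos : 0 < deriv (deriv F) (-1)

/-- The surface tension `C* = ∫_{-1}^1 √(2 F(u)) du`. -/
def Cstar (F : ℝ → ℝ) : ℝ := ∫ u in (-1 : ℝ)..1, Real.sqrt (2 * F u)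

/-- `m` is the optimal transition profile for the potential `F`: a solution of
`m' = √(2F(m))`, `m(±∞) = ±1`, `m(0) = 0`, with values in `[-1,1]`. -/
structure IsProfile (F m : ℝ → ℝ) : Prop where
  mem_Icc : ∀ x, m x ∈ Set.Icc (-1 : ℝ) 1
  ode : ∀ x, HasDerivAt m (Real.sqrt (2 * F (m x))) x
  limit_top : Tendsto m atTop (nhds 1)
  limit_bot : Tendsto m atBot (nhds (-1))
  zero : m 0 = 0


section AuxProfile
open Set
variable {F : ℝ → ℝ}


/-- the speed `g = √(2F)` -/
def gg (F : ℝ → ℝ) (u : ℝ) : ℝ := Real.sqrt (2 * F u)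

lemma hFcont (hF : IsStdPotential F) : Continuous F := hF.smooth.continuous

lemma hFderiv_cont (hF : IsStdPotential F) : Continuous (deriv F) := by
  have h := (contDiff_succ_iff_deriv (n := 2)).mp (by exact_mod_cast hF.smooth)
  exact h.2.2.continuous

lemma hFdderiv_cont (hF : IsStdPotential F) : Continuous (deriv (deriv F)) := by
  have h := (contDiff_succ_iff_deriv (n := 2)).mp (by exact_mod_cast hF.smooth)
  have h2 := (contDiff_succ_iff_deriv (n := 1)).mp (by exact_mod_cast h.2.2)
  exact h2.2.2.continuous

lemma Fpos (hF : IsStdPotential F) {u : ℝ} (h1 : u ≠ 1) (h2 : u ≠ -1) : 0 < F u := by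
  rcases lt_or_eq_of_le (hF.nonneg u) with h | h
  · exact h
  · exact absurd ((hF.zero_iff u).mp h.symm) (by tauto)

lemma gg_cont (hF : IsStdPotential F) : Continuous (gg F) :=
  Real.continuous_sqrt.comp (continuous_const.mul (hFcont hF))

lemma gg_pos (hF : IsStdPotential F) {u : ℝ} (h1 : u ≠ 1) (h2 : u ≠ -1) : 0 < gg F u :=
  Real.sqrt_pos.mpr (by have := Fpos hF h1 h2; linarith)

lemma gg_pos' (hF : IsStdPotential F) {u : ℝ} (h : u ∈ Ioo (-1:ℝ) 1) : 0 < gg F u :=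
  gg_pos hF (by rintro rfl; exact absurd h.2 (lt_irrefl _)) (by rintro rfl; exact absurd h.1 (lt_irrefl _))

lemma gg_even (hF : IsStdPotential F) (u : ℝ) : gg F (-u) = gg F u := by
  unfold gg; rw [hF.symm]

lemma inv_gg_contAt (hF : IsStdPotential F) {u : ℝ} (h : u ∈ Ioo (-1:ℝ) 1) :
    ContinuousAt (fun v => (gg F v)⁻¹) u :=
  ((gg_cont hF).continuousAt).inv₀ (gg_pos' hF h).ne'

lemma inv_gg_contOn (hF : IsStdPotential F) {s : Set ℝ} (hs : s ⊆ Ioo (-1:ℝ) 1) :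
    ContinuousOn (fun v => (gg F v)⁻¹) s := fun x hx =>
  (inv_gg_contAt hF (hs hx)).continuousWithinAt

lemma inv_gg_intble (hF : IsStdPotential F) {a b : ℝ} (ha : a ∈ Ioo (-1:ℝ) 1)
    (hb : b ∈ Ioo (-1:ℝ) 1) :
    IntervalIntegrable (fun v => (gg F v)⁻¹) volume a b := by
  apply ContinuousOn.intervalIntegrable
  apply inv_gg_contOn hF
  exact Set.ordConnected_Ioo.uIcc_subset ha hb

/-- `G(u) = ∫_0^u dv/g(v)`. -/
def GG (F : ℝ → ℝ) (u : ℝ) : ℝ := ∫ v in (0:ℝ)..u, (gg F v)⁻¹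

lemma zero_mem : (0:ℝ) ∈ Ioo (-1:ℝ) 1 := by norm_num

lemma GG_hasDerivAt (hF : IsStdPotential F) {u : ℝ} (h : u ∈ Ioo (-1:ℝ) 1) :
    HasDerivAt (GG F) (gg F u)⁻¹ u := by
  apply intervalIntegral.integral_hasDerivAt_right (inv_gg_intble hF zero_mem h)
  · exact ContinuousOn.stronglyMeasurableAtFilter isOpen_Ioo (inv_gg_contOn hF (subset_refl _)) u h
  · exact inv_gg_contAt hF h

lemma GG_contOn (hF : IsStdPotential F) : ContinuousOn (GG F) (Ioo (-1:ℝ) 1) :=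
  fun x hx => ((GG_hasDerivAt hF hx).continuousAt).continuousWithinAt

lemma GG_strictMonoOn (hF : IsStdPotential F) : StrictMonoOn (GG F) (Ioo (-1:ℝ) 1) := by
  apply strictMonoOn_of_deriv_pos (convex_Ioo _ _) (GG_contOn hF)
  intro x hx
  rw [interior_Ioo] at hx
  rw [(GG_hasDerivAt hF hx).deriv]
  exact inv_pos.mpr (gg_pos' hF hx)

lemma GG_zero : GG F 0 = 0 := by simp [GG]

lemma GG_odd (hF : IsStdPotential F) (u : ℝ) : GG F (-u) = - GG F u := by
  have : GG F u = ∫ v in (0:ℝ)..u, (gg F (-v))⁻¹ := by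
    unfold GG; congr 1; ext v; rw [gg_even hF]
  rw [this, intervalIntegral.integral_comp_neg fun v => (gg F v)⁻¹]
  unfold GG
  rw [intervalIntegral.integral_symm]
  simp

lemma deriv_F_one (hF : IsStdPotential F) : deriv F 1 = 0 := (hF.deriv_zero_iff 1).mpr (by tauto)

lemma F_one (hF : IsStdPotential F) : F 1 = 0 := (hF.zero_iff 1).mpr (by tauto)

/-- quadratic upper bound near `1`. -/
lemma hFdiff (hF : IsStdPotential F) : Differentiable ℝ F :=
  hF.smooth.differentiable (by norm_num)

lemma hF'diff (hF : IsStdPotential F) : Differentiable ℝ (deriv F) := by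
  have h := (contDiff_succ_iff_deriv (n := 2)).mp (by exact_mod_cast hF.smooth)
  exact h.2.2.differentiable (by norm_num)

lemma F_quad_bound (hF : IsStdPotential F) :
    ∃ K : ℝ, 0 < K ∧ ∀ v ∈ Icc (1/2 : ℝ) 1, F v ≤ K * (1 - v)^2 := by
  obtain ⟨K0, hK0⟩ := (isCompact_Icc (a := (1/2:ℝ)) (b := 1)).exists_bound_of_continuousOn
    (hFdderiv_cont hF).continuousOn
  set K := max K0 1 with hK
  have hKpos : (0:ℝ) < K := lt_of_lt_of_le one_pos (le_max_right _ _)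
  have hK' : ∀ x ∈ Icc (1/2:ℝ) 1, ‖deriv (deriv F) x‖ ≤ K := fun x hx =>
    (hK0 x hx).trans (le_max_left _ _)
  refine ⟨K, hKpos, fun v hv => ?_⟩
  -- first: |deriv F x| ≤ K * (1 - x) on [1/2, 1]
  have hd1 : ∀ x ∈ Icc (1/2:ℝ) 1, ‖deriv F x‖ ≤ K * (1 - x) := by
    intro x hx
    have := norm_image_sub_le_of_norm_deriv_le_segment'
      (f := deriv F) (f' := deriv (deriv F)) (a := x) (b := 1) (C := K)
      (fun y hy => ((hF'diff hF).differentiableAt.hasDerivAt).hasDerivWithinAt)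
      (fun y hy => hK' y ⟨le_trans hx.1 hy.1, hy.2.le⟩) 1 (right_mem_Icc.mpr hx.2)
    rw [deriv_F_one hF] at this
    simpa using this
  -- then: |F 1 - F v| ≤ (K (1-v)) * (1-v)
  have hd0 := norm_image_sub_le_of_norm_deriv_le_segment'
      (f := F) (f' := deriv F) (a := v) (b := 1) (C := K * (1 - v))
      (fun y hy => ((hFdiff hF).differentiableAt.hasDerivAt).hasDerivWithinAt)
      (fun y hy => by
        have h1 := hd1 y ⟨le_trans hv.1 hy.1, hy.2.le⟩
        have : 1 - y ≤ 1 - v := by linarith [hy.1]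
        nlinarith [norm_nonneg (deriv F y)])
      1 (right_mem_Icc.mpr hv.2)
  rw [F_one hF] at hd0
  have : |F v| ≤ K * (1 - v) * (1 - v) := by simpa using hd0
  calc F v ≤ |F v| := le_abs_self _
    _ ≤ K * (1 - v) * (1 - v) := this
    _ = K * (1 - v)^2 := by ring

lemma GG_tendsto_top (hF : IsStdPotential F) : Tendsto (GG F) (𝓝[<] (1:ℝ)) atTop := by
  obtain ⟨K, hKpos, hK⟩ := F_quad_bound hF
  set c : ℝ := (Real.sqrt (2 * K))⁻¹ with hc
  have hcpos : 0 < c := inv_pos.mpr (Real.sqrt_pos.mpr (by linarith))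
  -- lower bound for the integrand
  have hlow : ∀ v ∈ Icc (1/2:ℝ) 1, v ≠ 1 → c * (1 - v)⁻¹ ≤ (gg F v)⁻¹ := by
    intro v hv hv1
    have hv1' : 0 < 1 - v := lt_of_le_of_ne (by linarith [hv.2]) (by intro h; apply hv1; linarith)
    have hgb : gg F v ≤ Real.sqrt (2 * K) * (1 - v) := by
      have : (2 : ℝ) * F v ≤ (2 * K) * (1 - v)^2 := by nlinarith [hK v hv]
      calc gg F v = Real.sqrt (2 * F v) := rfl
        _ ≤ Real.sqrt ((2 * K) * (1 - v)^2) := Real.sqrt_le_sqrt this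
        _ = Real.sqrt (2 * K) * (1 - v) := by
            rw [Real.sqrt_mul (by linarith), Real.sqrt_sq hv1'.le]
    have hgpos : 0 < gg F v := gg_pos hF hv1 (by intro h; rw [h] at hv; norm_num at hv)
    have := one_div_le_one_div_of_le hgpos hgb
    rw [one_div, one_div] at this
    calc c * (1 - v)⁻¹ = (Real.sqrt (2 * K) * (1 - v))⁻¹ := by
          rw [mul_inv]
      _ ≤ (gg F v)⁻¹ := this
  -- integral lower bound for u ∈ (1/2, 1)
  have key : ∀ u ∈ Ioo (1/2:ℝ) 1,
      GG F (1/2) + (c * Real.log (1/2) - c * Real.log (1 - u)) ≤ GG F u := by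
    intro u hu
    have humem : u ∈ Ioo (-1:ℝ) 1 := ⟨by linarith [hu.1], hu.2⟩
    have hhalf : (1/2:ℝ) ∈ Ioo (-1:ℝ) 1 := by norm_num
    have hsplit : GG F (1/2) + ∫ v in (1/2:ℝ)..u, (gg F v)⁻¹ = GG F u := by
      unfold GG
      exact intervalIntegral.integral_add_adjacent_intervals
        (inv_gg_intble hF zero_mem hhalf) (inv_gg_intble hF hhalf humem)
    -- FTC for the comparison function
    have hftc : ∀ x ∈ uIcc (1/2:ℝ) u,
        HasDerivAt (fun v => -(c * Real.log (1 - v))) (c * (1 - x)⁻¹) x := by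
      intro x hx
      rw [uIcc_of_le hu.1.le] at hx
      have hx1 : 0 < 1 - x := by have := hx.2; have := hu.2; nlinarith [hx.2, hu.2]
      have h1 : HasDerivAt (fun v : ℝ => 1 - v) (-1) x := by
        simpa using (hasDerivAt_id x).const_sub 1
      have h2 := (Real.hasDerivAt_log hx1.ne').comp x h1
      have h3 := (h2.const_mul c).neg
      refine h3.congr_deriv ?_
      ring
    have hcont2 : ContinuousOn (fun x => c * (1 - x)⁻¹) (uIcc (1/2:ℝ) u) := by
      rw [uIcc_of_le hu.1.le]
      apply ContinuousOn.mul continuousOn_const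
      apply ContinuousOn.inv₀ (by fun_prop)
      intro x hx
      have := hu.2; have := hx.2
      intro h; nlinarith [hx.2, hu.2]
    have hint2 : IntervalIntegrable (fun x => c * (1 - x)⁻¹) volume (1/2) u :=
      hcont2.intervalIntegrable
    have hcomp : (∫ v in (1/2:ℝ)..u, c * (1 - v)⁻¹) ≤ ∫ v in (1/2:ℝ)..u, (gg F v)⁻¹ := by
      rw [intervalIntegral.integral_of_le hu.1.le, intervalIntegral.integral_of_le hu.1.le]
      apply setIntegral_mono_on (hint2.1) ((inv_gg_intble hF hhalf humem).1) measurableSet_Ioc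
      intro x hx
      exact hlow x ⟨hx.1.le, by linarith [hx.2, hu.2.le]⟩ (by intro h; rw [h] at hx; linarith [hx.2, hu.2])
    have hval : (∫ v in (1/2:ℝ)..u, c * (1 - v)⁻¹)
        = -(c * Real.log (1 - u)) - -(c * Real.log (1 - 1/2)) := by
      exact intervalIntegral.integral_eq_sub_of_hasDerivAt hftc hint2
    have : c * Real.log (1/2) - c * Real.log (1 - u) ≤ ∫ v in (1/2:ℝ)..u, (gg F v)⁻¹ := by
      rw [← hsplit] at *
      calc c * Real.log (1/2) - c * Real.log (1 - u)
          = -(c * Real.log (1 - u)) - -(c * Real.log (1 - 1/2)) := by norm_num; ring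
        _ = ∫ v in (1/2:ℝ)..u, c * (1 - v)⁻¹ := hval.symm
        _ ≤ _ := hcomp
    linarith [this, hsplit.symm.le]
  -- conclude
  have hlog : Tendsto (fun u : ℝ => Real.log (1 - u)) (𝓝[<] (1:ℝ)) atBot := by
    apply Real.tendsto_log_nhdsGT_zero.comp
    rw [tendsto_nhdsWithin_iff]
    constructor
    · apply tendsto_nhdsWithin_of_tendsto_nhds
      have : Tendsto (fun u : ℝ => 1 - u) (𝓝 1) (𝓝 (1 - 1)) :=
        (continuous_const.sub continuous_id).tendsto 1
      simpa using this
    · filter_upwards [self_mem_nhdsWithin] with u hu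
      exact mem_Ioi.mpr (sub_pos.mpr (mem_Iio.mp hu))
  have hmain : Tendsto (fun u => GG F (1/2) + (c * Real.log (1/2) - c * Real.log (1 - u)))
      (𝓝[<] (1:ℝ)) atTop := by
    apply tendsto_atTop_add_const_left
    apply tendsto_atTop_add_const_left
    have h1 : Tendsto (fun u : ℝ => c * Real.log (1 - u)) (𝓝[<] (1:ℝ)) atBot :=
      hlog.const_mul_atBot hcpos
    have h2 : Tendsto (fun u : ℝ => -(c * Real.log (1 - u))) (𝓝[<] (1:ℝ)) atTop :=
      tendsto_neg_atBot_atTop.comp h1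
    exact h2.congr (fun x => by ring)
  apply tendsto_atTop_mono' _ _ hmain
  filter_upwards [Ioo_mem_nhdsLT_of_mem (by norm_num : (1:ℝ) ∈ Ioc (1/2:ℝ) 1)] with u hu
  exact key u hu

lemma GG_tendsto_bot (hF : IsStdPotential F) : Tendsto (GG F) (𝓝[>] (-1:ℝ)) atBot := by
  have hneg : Tendsto (fun u : ℝ => -u) (𝓝[>] (-1:ℝ)) (𝓝[<] (1:ℝ)) := by
    rw [tendsto_nhdsWithin_iff]
    constructor
    · apply tendsto_nhdsWithin_of_tendsto_nhds
      simpa using (continuous_neg.tendsto (-1:ℝ))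
    · filter_upwards [self_mem_nhdsWithin] with u hu
      exact mem_Iio.mpr (by simpa using neg_lt_neg (mem_Ioi.mp hu))
  have h1 : Tendsto (fun u : ℝ => GG F (-u)) (𝓝[>] (-1:ℝ)) atTop :=
    (GG_tendsto_top hF).comp hneg
  have h2 : Tendsto (fun u : ℝ => -GG F (-u)) (𝓝[>] (-1:ℝ)) atBot :=
    tendsto_neg_atTop_atBot.comp h1
  apply h2.congr
  intro x
  rw [GG_odd hF, neg_neg]

lemma GG_surj (hF : IsStdPotential F) (y : ℝ) : ∃ u ∈ Ioo (-1:ℝ) 1, GG F u = y := by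
  have hIoo_bot : Ioo (-1:ℝ) 1 ∈ 𝓝[>] (-1:ℝ) :=
    Ioo_mem_nhdsGT_of_mem (by norm_num : (-1:ℝ) ∈ Ico (-1:ℝ) 1)
  have hIoo_top : Ioo (-1:ℝ) 1 ∈ 𝓝[<] (1:ℝ) :=
    Ioo_mem_nhdsLT_of_mem (by norm_num : (1:ℝ) ∈ Ioc (-1:ℝ) 1)
  obtain ⟨a, ha1, ha2⟩ := (((GG_tendsto_bot hF).eventually_lt_atBot y).and hIoo_bot).exists
  obtain ⟨b, hb1, hb2⟩ := (((GG_tendsto_top hF).eventually_gt_atTop y).and hIoo_top).exists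
  have hab : a ≤ b := by
    by_contra h
    push_neg at h
    have := (GG_strictMonoOn hF) hb2 ha2 h
    linarith
  have hsub : Icc a b ⊆ Ioo (-1:ℝ) 1 := Icc_subset_Ioo ha2.1 hb2.2
  have := intermediate_value_Icc hab ((GG_contOn hF).mono hsub)
  obtain ⟨x, hx, hgx⟩ := this ⟨ha1.le, hb1.le⟩
  exact ⟨x, hsub hx, hgx⟩

open scoped Classical in
/-- the profile, defined as the inverse of `G`. -/
def mm (F : ℝ → ℝ) (x : ℝ) : ℝ := if h : ∃ u ∈ Ioo (-1:ℝ) 1, GG F u = x then h.choose else 0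

open scoped Classical in
lemma mm_mem (hF : IsStdPotential F) (x : ℝ) : mm F x ∈ Ioo (-1:ℝ) 1 := by
  unfold mm
  rw [dif_pos (GG_surj hF x)]
  exact (GG_surj hF x).choose_spec.1

open scoped Classical in
lemma GG_mm (hF : IsStdPotential F) (x : ℝ) : GG F (mm F x) = x := by
  unfold mm
  rw [dif_pos (GG_surj hF x)]
  exact (GG_surj hF x).choose_spec.2

lemma mm_GG (hF : IsStdPotential F) {u : ℝ} (h : u ∈ Ioo (-1:ℝ) 1) : mm F (GG F u) = u :=
  (GG_strictMonoOn hF).injOn (mm_mem hF _) h (GG_mm hF _)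

lemma mm_lt_iff (hF : IsStdPotential F) {u x : ℝ} (h : u ∈ Ioo (-1:ℝ) 1) :
    u < mm F x ↔ GG F u < x := by
  have h2 := (GG_strictMonoOn hF).lt_iff_lt h (mm_mem hF x)
  rw [GG_mm hF] at h2
  exact h2.symm

lemma mm_mono (hF : IsStdPotential F) : Monotone (mm F) := by
  intro x y hxy
  by_contra h
  push_neg at h
  have := (GG_strictMonoOn hF) (mm_mem hF y) (mm_mem hF x) h
  rw [GG_mm hF, GG_mm hF] at this
  linarith

lemma mm_inj (hF : IsStdPotential F) : Function.Injective (mm F) := by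
  intro a b h
  have := GG_mm hF a
  rw [h, GG_mm hF] at this
  exact this.symm

lemma mm_contAt (hF : IsStdPotential F) (x : ℝ) : ContinuousAt (mm F) x := by
  apply continuousAt_of_monotoneOn_of_image_mem_nhds (s := univ)
    ((mm_mono hF).monotoneOn _) univ_mem
  rw [image_univ]
  apply Filter.mem_of_superset (isOpen_Ioo.mem_nhds (mm_mem hF x))
  intro v hv
  exact ⟨GG F v, mm_GG hF hv⟩

lemma mm_hasDerivAt (hF : IsStdPotential F) (x : ℝ) :
    HasDerivAt (mm F) (gg F (mm F x)) x := by
  have h := HasDerivAt.of_local_left_inverse (mm_contAt hF x)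
    (GG_hasDerivAt hF (mm_mem hF x))
    (inv_ne_zero (gg_pos' hF (mm_mem hF x)).ne')
    (Eventually.of_forall (GG_mm hF))
  simpa using h

lemma mm_zero (hF : IsStdPotential F) : mm F 0 = 0 := by
  have := mm_GG hF zero_mem
  rwa [GG_zero] at this

lemma mm_tendsto_top (hF : IsStdPotential F) : Tendsto (mm F) atTop (𝓝 1) := by
  rw [tendsto_order]
  constructor
  · intro a ha
    set a' := max a 0 with ha'
    have ha'mem : a' ∈ Ioo (-1:ℝ) 1 := ⟨lt_of_lt_of_le (by norm_num) (le_max_right a 0), max_lt ha (by norm_num)⟩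
    filter_upwards [eventually_gt_atTop (GG F a')] with x hx
    exact lt_of_le_of_lt (le_max_left a 0) ((mm_lt_iff hF ha'mem).mpr hx)
  · intro a ha
    filter_upwards with x
    exact lt_trans (mm_mem hF x).2 ha

lemma mm_tendsto_bot (hF : IsStdPotential F) : Tendsto (mm F) atBot (𝓝 (-1)) := by
  rw [tendsto_order]
  constructor
  · intro a ha
    filter_upwards with x
    exact lt_trans ha (mm_mem hF x).1
  · intro a ha
    set a' := min a 0 with ha'
    have ha'mem : a' ∈ Ioo (-1:ℝ) 1 :=
      ⟨lt_min ha (by norm_num), lt_of_le_of_lt (min_le_right _ _) one_pos⟩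
    filter_upwards [eventually_lt_atBot (GG F a')] with x hx
    have : mm F x < a' := by
      have h := ((GG_strictMonoOn hF).lt_iff_lt (mm_mem hF x) ha'mem)
      rw [GG_mm hF] at h
      exact h.mp hx
    exact lt_of_lt_of_le this (min_le_left _ _)

section Solutions
variable {u : ℝ → ℝ}

lemma sol_mono (hF : IsStdPotential F) (hode : ∀ x, HasDerivAt u (gg F (u x)) x) :
    Monotone u :=
  monotone_of_deriv_nonneg (fun x => (hode x).differentiableAt)
    (fun x => by rw [(hode x).deriv]; exact Real.sqrt_nonneg _)

lemma sol_cont (hode : ∀ x, HasDerivAt u (gg F (u x)) x) : Continuous u :=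
  continuous_iff_continuousAt.mpr fun x => (hode x).continuousAt

lemma sol_le_one (hF : IsStdPotential F) (hode : ∀ x, HasDerivAt u (gg F (u x)) x)
    (htop : Tendsto u atTop (𝓝 1)) : ∀ x, u x ≤ 1 := fun x =>
  ge_of_tendsto htop ((eventually_ge_atTop x).mono fun y hy => sol_mono hF hode hy)

lemma sol_ge_neg_one (hF : IsStdPotential F) (hode : ∀ x, HasDerivAt u (gg F (u x)) x)
    (hbot : Tendsto u atBot (𝓝 (-1))) : ∀ x, -1 ≤ u x := fun x =>
  le_of_tendsto hbot ((eventually_le_atBot x).mono fun y hy => sol_mono hF hode hy)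

lemma sol_ne_one (hF : IsStdPotential F) (hode : ∀ x, HasDerivAt u (gg F (u x)) x)
    (htop : Tendsto u atTop (𝓝 1)) (hbot : Tendsto u atBot (𝓝 (-1))) :
    ∀ x, u x ≠ 1 := by
  intro x₀ hx₀
  have hmono := sol_mono hF hode
  have hle := sol_le_one hF hode htop
  set S := {x : ℝ | u x = 1} with hS
  obtain ⟨x₁, hx₁⟩ : ∃ x₁, u x₁ < 0 :=
    (hbot.eventually (eventually_lt_nhds (by norm_num : (-1:ℝ) < 0))).exists
  have hSne : S.Nonempty := ⟨x₀, hx₀⟩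
  have hSclosed : IsClosed S := isClosed_eq (sol_cont hode) continuous_const
  have hlb : ∀ s ∈ S, x₁ < s := by
    intro s hs
    by_contra h
    push_neg at h
    have := hmono h
    rw [hs] at this
    linarith
  set z := sInf S with hz
  have hzS : z ∈ S := hSclosed.csInf_mem hSne ⟨x₁, fun s hs => (hlb s hs).le⟩
  have hx₁z : x₁ < z := hlb z hzS
  -- a point where u = 0
  obtain ⟨x₂, hx₂mem, hx₂⟩ : ∃ x₂ ∈ Icc x₁ z, u x₂ = 0 := by
    have := intermediate_value_Icc hx₁z.le (sol_cont hode).continuousOn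
    have h0 : (0:ℝ) ∈ Icc (u x₁) (u z) := ⟨hx₁.le, by rw [hzS]; norm_num⟩
    exact this h0
  have hx₂z : x₂ < z := by
    rcases lt_or_eq_of_le hx₂mem.2 with h | h
    · exact h
    · rw [h] at hx₂; rw [hzS] at hx₂; norm_num at hx₂
  have hlt : ∀ y, y < z → u y < 1 := by
    intro y hy
    rcases lt_or_eq_of_le (hle y) with h | h
    · exact h
    · exact absurd (csInf_le ⟨x₁, fun s hs => (hlb s hs).le⟩ h) (not_le.mpr hy)
  -- constancy of G(u(y)) - y on [x₂, z)
  have key : ∀ y ∈ Ico x₂ z, GG F (u y) - y = GG F (u x₂) - x₂ := by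
    intro y hy
    have hmem : ∀ w ∈ Icc x₂ y, u w ∈ Ioo (-1:ℝ) 1 := by
      intro w hw
      constructor
      · have : (0:ℝ) ≤ u w := by rw [← hx₂]; exact hmono hw.1
        linarith
      · exact lt_of_le_of_lt (hmono hw.2) (hlt y hy.2)
    have hderiv : ∀ w ∈ Icc x₂ y, HasDerivAt (fun t => GG F (u t) - t) 0 w := by
      intro w hw
      have h1 := (GG_hasDerivAt hF (hmem w hw)).comp w (hode w)
      have h2 := h1.sub (hasDerivAt_id w)
      refine h2.congr_deriv ?_
      rw [inv_mul_cancel₀ (gg_pos' hF (hmem w hw)).ne']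
      norm_num
    have := constant_of_has_deriv_right_zero
      (f := fun t => GG F (u t) - t) (a := x₂) (b := y)
      (fun w hw => (hderiv w hw).continuousAt.continuousWithinAt)
      (fun w hw => ((hderiv w (Ico_subset_Icc_self hw)).hasDerivWithinAt))
    exact this y (right_mem_Icc.mpr hy.1)
  -- contradiction via divergence of G at 1⁻
  have hulim : Tendsto u (𝓝[<] z) (𝓝[<] (1:ℝ)) := by
    apply tendsto_nhdsWithin_of_tendsto_nhds_of_eventually_within
    · have : Tendsto u (𝓝 z) (𝓝 (u z)) := (sol_cont hode).continuousAt
      rw [show u z = 1 from hzS] at this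
      exact this.mono_left nhdsWithin_le_nhds
    · filter_upwards [self_mem_nhdsWithin] with y hy
      exact mem_Iio.mpr (hlt y hy)
  have hGlim : Tendsto (fun y => GG F (u y)) (𝓝[<] z) atTop :=
    (GG_tendsto_top hF).comp hulim
  set c := GG F (u x₂) - x₂ with hcdef
  have heq : ∀ᶠ y in 𝓝[<] z, GG F (u y) = y + c := by
    filter_upwards [Ioo_mem_nhdsLT_of_mem (mem_Ioc.mpr ⟨hx₂z, le_refl z⟩)] with y hy
    have := key y ⟨hy.1.le, hy.2⟩
    linarith
  have h1 : Tendsto (fun y : ℝ => y + c) (𝓝[<] z) atTop := hGlim.congr' heq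
  have h2 : Tendsto (fun y : ℝ => y + c) (𝓝[<] z) (𝓝 (z + c)) :=
    ((continuous_id.add continuous_const).tendsto z).mono_left nhdsWithin_le_nhds
  exact not_tendsto_atTop_of_tendsto_nhds h2 h1

lemma sol_ne_neg_one (hF : IsStdPotential F) (hode : ∀ x, HasDerivAt u (gg F (u x)) x)
    (htop : Tendsto u atTop (𝓝 1)) (hbot : Tendsto u atBot (𝓝 (-1))) :
    ∀ x, u x ≠ -1 := by
  intro x hx
  set v : ℝ → ℝ := fun t => -u (-t) with hv
  have hvode : ∀ t, HasDerivAt v (gg F (v t)) t := by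
    intro t
    have h1 : HasDerivAt (fun s : ℝ => u (-s)) (gg F (u (-t)) * (-1)) t :=
      (hode (-t)).comp t (hasDerivAt_neg t)
    have h2 := h1.neg
    have h3 : gg F (u (-t)) = gg F (v t) := (gg_even hF (u (-t))).symm
    refine h2.congr_deriv ?_
    rw [← h3]; ring
  have hvtop : Tendsto v atTop (𝓝 1) := by
    have := (hbot.comp tendsto_neg_atTop_atBot).neg
    simpa using this
  have hvbot : Tendsto v atBot (𝓝 (-1)) := by
    have := (htop.comp tendsto_neg_atBot_atTop).neg
    exact this
  have := sol_ne_one hF hvode hvtop hvbot (-x)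
  apply this
  rw [hv]
  simp only [neg_neg]
  rw [hx]
  norm_num

lemma sol_mem_Ioo (hF : IsStdPotential F) (hode : ∀ x, HasDerivAt u (gg F (u x)) x)
    (htop : Tendsto u atTop (𝓝 1)) (hbot : Tendsto u atBot (𝓝 (-1))) :
    ∀ x, u x ∈ Ioo (-1:ℝ) 1 := fun x =>
  ⟨lt_of_le_of_ne (sol_ge_neg_one hF hode hbot x) (Ne.symm (sol_ne_neg_one hF hode htop hbot x)),
   lt_of_le_of_ne (sol_le_one hF hode htop x) (sol_ne_one hF hode htop hbot x)⟩

lemma sol_eq_translate (hF : IsStdPotential F) (hode : ∀ x, HasDerivAt u (gg F (u x)) x)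
    (htop : Tendsto u atTop (𝓝 1)) (hbot : Tendsto u atBot (𝓝 (-1))) :
    ∀ x, u x = mm F (x + GG F (u 0)) := by
  have hmem := sol_mem_Ioo hF hode htop hbot
  have hderiv : ∀ x, HasDerivAt (fun t => GG F (u t) - t) 0 x := by
    intro x
    have h1 := (GG_hasDerivAt hF (hmem x)).comp x (hode x)
    have h2 := h1.sub (hasDerivAt_id x)
    refine h2.congr_deriv ?_
    rw [inv_mul_cancel₀ (gg_pos' hF (hmem x)).ne']
    norm_num
  have hconst := is_const_of_deriv_eq_zero
    (f := fun t => GG F (u t) - t)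
    (fun x => (hderiv x).differentiableAt) (fun x => (hderiv x).deriv)
  intro x
  have h1 : GG F (u x) - x = GG F (u 0) - 0 := hconst x 0
  have h2 : GG F (u x) = x + GG F (u 0) := by linarith
  have h3 : mm F (GG F (u x)) = u x := mm_GG hF (hmem x)
  rw [← h3, h2]

end Solutions

end AuxProfile

/-- The ODE `m' = √(2F(m))` with boundary conditions `m(±∞) = ±1` has a
unique solution with `m(0) = 0`, and every solution of the boundary value problem is a
translate of it. -/
theorem statement2 (F : ℝ → ℝ) (hF : IsStdPotential F) :
    (∃! m : ℝ → ℝ, (∀ x, HasDerivAt m (Real.sqrt (2 * F (m x))) x) ∧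
        Tendsto m atTop (𝓝 1) ∧ Tendsto m atBot (𝓝 (-1)) ∧ m 0 = 0) ∧
    (∀ m u : ℝ → ℝ,
      ((∀ x, HasDerivAt m (Real.sqrt (2 * F (m x))) x) ∧
        Tendsto m atTop (𝓝 1) ∧ Tendsto m atBot (𝓝 (-1)) ∧ m 0 = 0) →
      ((∀ x, HasDerivAt u (Real.sqrt (2 * F (u x))) x) ∧
        Tendsto u atTop (𝓝 1) ∧ Tendsto u atBot (𝓝 (-1))) →
      ∃ ξ : ℝ, u = fun x => m (x - ξ)) := by
  have heq : ∀ (m : ℝ → ℝ) (x : ℝ), m 0 = 0 → (∀ y, m y = mm F (y + GG F (m 0))) → m x = mm F x := by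
    intro m x h0 h
    have := h x
    rw [h0, GG_zero] at this
    simpa using this
  constructor
  · refine ⟨mm F, ⟨fun x => mm_hasDerivAt hF x, mm_tendsto_top hF, mm_tendsto_bot hF, mm_zero hF⟩, ?_⟩
    rintro u ⟨hode, htop, hbot, hzero⟩
    funext x
    exact heq u x hzero (fun y => sol_eq_translate hF hode htop hbot y)
  · rintro m u ⟨hmode, hmtop, hmbot, hmzero⟩ ⟨huode, hutop, hubot⟩
    have hm : ∀ x, m x = mm F x := fun x =>
      heq m x hmzero (fun y => sol_eq_translate hF hmode hmtop hmbot y)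
    have hu := sol_eq_translate hF huode hutop hubot
    refine ⟨-(GG F (u 0)), ?_⟩
    funext x
    rw [hu x, hm (x - -(GG F (u 0)))]
    congr 1
    ring


end
end

section
/- Let D^n = ℝ × (0,1)^n and D^{n+1} = ℝ × (0,1)^{n+1}, and for h : D^{n+1} → ℝ piecewise differentiable write h_t(w) = h(w,t) for t ∈ (0,1). Then dist_{L²(D^{n+1})}(h, M_{n+1}) ≤ min_{t∈(0,1)} dist_{L²(D^n)}(h_t, M_n) + ‖∂_t h‖_{L²(D^{n+1})}, where M_k denotes the set of translated profiles m_ξ(x,y) = m(x−ξ) on D^k and dist is the L² distance to this set. -/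
open MeasureTheory Real Filter Topology
open scoped ENNReal RealInnerProductSpace

noncomputable section

/-- The domain `D^n = ℝ × (0,1)^n`, modelled as a subset of `ℝ × ℝ^n`. -/
def domW (n : ℕ) : Set (ℝ × (Fin n → ℝ)) := {w | ∀ i : Fin n, w.2 i ∈ Set.Ioo (0:ℝ) 1}

section auxlemmas
open scoped NNReal



lemma exists_lipschitzOnWith_Icc {f : ℝ → ℝ} (hf : LocallyLipschitz f) (a b : ℝ) :
    ∃ K : ℝ≥0, LipschitzOnWith K f (Set.Icc a b) := by
  set S : Set ℝ := {x | x ∈ Set.Icc a b ∧ ∃ K : ℝ≥0, LipschitzOnWith K f (Set.Icc a x)} with hS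
  rcases le_or_gt a b with hab | hab
  swap
  · exact ⟨0, by simp [Set.Icc_eq_empty_of_lt hab]⟩
  have haS : a ∈ S := by
    refine ⟨⟨le_refl a, hab⟩, 0, ?_⟩
    intro x hx y hy
    simp only [Set.Icc_self, Set.mem_singleton_iff] at hx hy
    simp [hx, hy]
  have hbdd : BddAbove S := ⟨b, fun x hx => hx.1.2⟩
  set c := sSup S with hc
  have hacb : c ∈ Set.Icc a b := ⟨le_csSup hbdd haS, csSup_le ⟨a, haS⟩ fun x hx => hx.1.2⟩
  obtain ⟨K₀, t, ht, hK₀⟩ := hf c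
  obtain ⟨ε, εpos, hball⟩ := Metric.mem_nhds_iff.1 ht
  have hK₀' : LipschitzOnWith K₀ f (Metric.ball c ε) := hK₀.mono hball
  obtain ⟨x, hxS, hxgt⟩ : ∃ x ∈ S, c - ε / 2 < x :=
    exists_lt_of_lt_csSup ⟨a, haS⟩ (by linarith)
  obtain ⟨hxab, K₁, hK₁⟩ := hxS
  have hxc : x ≤ c := le_csSup hbdd ⟨hxab, K₁, hK₁⟩
  set y := min b (c + ε / 2) with hy
  have hcy : c ≤ y := le_min hacb.2 (by linarith)
  have hxy : x ≤ y := le_trans hxc hcy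
  have hyce : y ≤ c + ε / 2 := min_le_right _ _
  have hyS : y ∈ S := by
    refine ⟨⟨le_trans hxab.1 hxy, min_le_left _ _⟩, K₀ + K₁, ?_⟩
    rw [lipschitzOnWith_iff_dist_le_mul]
    have hmem : ∀ w, x ≤ w → w ≤ y → w ∈ Metric.ball c ε := by
      intro w h1 h2
      rw [Metric.mem_ball, Real.dist_eq, abs_lt]
      constructor <;> nlinarith
    have key : ∀ u v, u ∈ Set.Icc a y → v ∈ Set.Icc a y → u ≤ v →
        dist (f u) (f v) ≤ (K₀ + K₁ : ℝ≥0) * dist u v := by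
      intro u v hu hv huv
      have hd : ((K₀ + K₁ : ℝ≥0) : ℝ) = (K₀ : ℝ) + (K₁ : ℝ) := by push_cast; ring
      rcases le_total v x with hvx | hxv
      · have h1 := (lipschitzOnWith_iff_dist_le_mul.1 hK₁) u ⟨hu.1, le_trans huv hvx⟩ v ⟨hv.1, hvx⟩
        refine le_trans h1 ?_
        rw [hd]
        nlinarith [K₀.coe_nonneg, dist_nonneg (x := u) (y := v)]
      rcases le_total u x with hux | hxu
      · have h1 := (lipschitzOnWith_iff_dist_le_mul.1 hK₁) u ⟨hu.1, hux⟩ x ⟨hxab.1, le_refl x⟩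
        have h2 := (lipschitzOnWith_iff_dist_le_mul.1 hK₀') x (hmem x (le_refl x) hxy)
          v (hmem v hxv hv.2)
        refine le_trans (dist_triangle (f u) (f x) (f v)) (le_trans (add_le_add h1 h2) ?_)
        rw [hd, Real.dist_eq, Real.dist_eq, Real.dist_eq]
        rw [abs_of_nonpos (by linarith), abs_of_nonpos (by linarith),
          abs_of_nonpos (by linarith)]
        nlinarith [K₀.coe_nonneg, K₁.coe_nonneg]
      · have h1 := (lipschitzOnWith_iff_dist_le_mul.1 hK₀') u (hmem u hxu (le_trans huv hv.2))
          v (hmem v (le_trans hxu huv) hv.2)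
        refine le_trans h1 ?_
        rw [hd]
        nlinarith [K₁.coe_nonneg, dist_nonneg (x := u) (y := v)]
    intro u hu v hv
    rcases le_total u v with huv | hvu
    · exact key u v hu hv huv
    · rw [dist_comm, dist_comm u v]; exact key v u hv hu hvu
  have hyc : y ≤ c := le_csSup hbdd hyS
  have hcb : c = b := by
    by_contra hne
    have hcb' : c < b := lt_of_le_of_ne hacb.2 hne
    have : c < y := lt_min hcb' (by linarith)
    linarith
  obtain ⟨_, K, hK⟩ := hyS
  refine ⟨K, ?_⟩
  have hyb : y = b := le_antisymm (min_le_left _ _) (hcb ▸ hcy)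
  rwa [hyb] at hK

lemma monotone_setLIntegral_deriv_le {g : ℝ → ℝ} (hg : Monotone g) (hc : Continuous g)
    {a b : ℝ} (hab : a ≤ b) :
    ∫⁻ x in Set.Ioc a b, ENNReal.ofReal (deriv g x) ≤ ENNReal.ofReal (g b - g a) := by
  set c : ℕ → ℝ := fun n => ((n : ℝ) + 1)⁻¹ with hcdef
  have hcpos : ∀ n, 0 < c n := fun n => by positivity
  have hctend : Tendsto c atTop (𝓝 0) := by
    simpa [hcdef, one_div] using tendsto_one_div_add_atTop_nhds_zero_nat (𝕜 := ℝ)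
  set ψ : ℕ → ℝ → ℝ := fun n x => ((n : ℝ) + 1) * (g (x + c n) - g x) with hψdef
  set φ : ℕ → ℝ → ℝ≥0∞ := fun n x => ENNReal.ofReal (ψ n x) with hφdef
  have hψcont : ∀ n, Continuous (ψ n) := fun n =>
    continuous_const.mul ((hc.comp (continuous_id.add continuous_const)).sub hc)
  have hψnn : ∀ n x, 0 ≤ ψ n x := fun n x =>
    mul_nonneg (by positivity) (sub_nonneg.2 (hg (le_add_of_nonneg_right (hcpos n).le)))
  have hφmeas : ∀ n, Measurable (φ n) := fun n =>
    ENNReal.measurable_ofReal.comp (hψcont n).measurable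
  -- a.e. convergence to ofReal (deriv g)
  have hae : ∀ᵐ x, Tendsto (fun n => φ n x) atTop (𝓝 (ENNReal.ofReal (deriv g x))) := by
    filter_upwards [hg.ae_hasDerivAt] with x hx
    have hx' : HasDerivAt g (deriv g x) x := hx.differentiableAt.hasDerivAt
    have hslope := hasDerivAt_iff_tendsto_slope.1 hx'
    have hseq : Tendsto (fun n => x + c n) atTop (𝓝[≠] x) := by
      rw [tendsto_nhdsWithin_iff]
      constructor
      · simpa using (tendsto_const_nhds.add hctend)
      · exact Eventually.of_forall fun n => by
          simp [ne_of_gt (lt_add_of_pos_right x (hcpos n))]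
    have : Tendsto (fun n => slope g x (x + c n)) atTop (𝓝 (deriv g x)) :=
      hslope.comp hseq
    have heq : (fun n => slope g x (x + c n)) = fun n => ψ n x := by
      funext n
      rw [slope_def_field, add_sub_cancel_left]
      simp only [hψdef, hcdef]
      field_simp
    rw [heq] at this
    exact (ENNReal.tendsto_ofReal this)
  have h1 : ∫⁻ x in Set.Ioc a b, ENNReal.ofReal (deriv g x)
      = ∫⁻ x in Set.Ioc a b, liminf (fun n => φ n x) atTop := by
    refine lintegral_congr_ae ?_
    filter_upwards [ae_restrict_of_ae hae] with x hx
    exact hx.liminf_eq.symm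
  have h2 := lintegral_liminf_le (u := atTop) (μ := volume.restrict (Set.Ioc a b)) hφmeas
  -- each integral bound
  have h3 : ∀ n, ∫⁻ x in Set.Ioc a b, φ n x ≤ ENNReal.ofReal (g (b + c n) - g a) := by
    intro n
    have hint : IntegrableOn (ψ n) (Set.Ioc a b) := (hψcont n).integrableOn_Ioc
    rw [← ofReal_integral_eq_lintegral_ofReal hint
      (Eventually.of_forall fun x => hψnn n x)]
    apply ENNReal.ofReal_le_ofReal
    have igr : ∀ u v : ℝ, IntervalIntegrable g volume u v := fun u v => hc.intervalIntegrable u v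
    have hiv : ∫ x in Set.Ioc a b, ψ n x = ∫ x in a..b, ψ n x :=
      (intervalIntegral.integral_of_le hab).symm
    rw [hiv]
    have i1 : IntervalIntegrable (fun x => g (x + c n)) volume a b :=
      (hc.comp (continuous_add_right (c n))).intervalIntegrable a b
    have e1 : ∫ x in a..b, ψ n x
        = ((n:ℝ)+1) * ((∫ x in a..b, g (x + c n)) - ∫ x in a..b, g x) := by
      rw [← intervalIntegral.integral_sub i1 (igr a b), ← intervalIntegral.integral_const_mul]
    have e2 : ∫ x in a..b, g (x + c n) = ∫ x in (a + c n)..(b + c n), g x :=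
      intervalIntegral.integral_comp_add_right g (c n)
    have chasles1 : (∫ x in a..(a + c n), g x) + ∫ x in (a + c n)..(b + c n), g x
        = ∫ x in a..(b + c n), g x := intervalIntegral.integral_add_adjacent_intervals (igr _ _) (igr _ _)
    have chasles2 : (∫ x in a..b, g x) + ∫ x in b..(b + c n), g x
        = ∫ x in a..(b + c n), g x := intervalIntegral.integral_add_adjacent_intervals (igr _ _) (igr _ _)
    have bnd1 : ∫ x in b..(b + c n), g x ≤ c n * g (b + c n) := by
      have := intervalIntegral.integral_mono_on (le_add_of_nonneg_right (hcpos n).le)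
        (igr b (b + c n)) (intervalIntegrable_const) (fun x hx => hg hx.2)
      simpa using this
    have bnd2 : c n * g a ≤ ∫ x in a..(a + c n), g x := by
      have := intervalIntegral.integral_mono_on (le_add_of_nonneg_right (hcpos n).le)
        (intervalIntegrable_const) (igr a (a + c n)) (fun x hx => hg hx.1)
      simpa using this
    have hmul : ((n:ℝ)+1) * c n = 1 := by
      simp only [hcdef]
      field_simp
    calc ∫ x in a..b, ψ n x
        = ((n:ℝ)+1) * ((∫ x in (a + c n)..(b + c n), g x) - ∫ x in a..b, g x) := by rw [e1, e2]
      _ = ((n:ℝ)+1) * ((∫ x in b..(b + c n), g x) - ∫ x in a..(a + c n), g x) := by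
          congr 1; linarith
      _ ≤ ((n:ℝ)+1) * (c n * g (b + c n) - c n * g a) := by
          have hnn : (0:ℝ) ≤ (n:ℝ)+1 := by positivity
          apply mul_le_mul_of_nonneg_left _ hnn
          linarith
      _ = g (b + c n) - g a := by
          rw [mul_sub, ← mul_assoc, ← mul_assoc, hmul, one_mul, one_mul]
  -- conclude
  have h4 : liminf (fun n => ∫⁻ x in Set.Ioc a b, φ n x) atTop
      ≤ ENNReal.ofReal (g b - g a) := by
    have htend : Tendsto (fun n => ENNReal.ofReal (g (b + c n) - g a)) atTop
        (𝓝 (ENNReal.ofReal (g b - g a))) := by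
      apply ENNReal.tendsto_ofReal
      have : Tendsto (fun n => b + c n) atTop (𝓝 b) := by
        simpa using (tendsto_const_nhds.add hctend)
      exact ((hc.tendsto b).comp this).sub tendsto_const_nhds
    calc liminf (fun n => ∫⁻ x in Set.Ioc a b, φ n x) atTop
        ≤ liminf (fun n => ENNReal.ofReal (g (b + c n) - g a)) atTop :=
          liminf_le_liminf (Eventually.of_forall h3)
      _ = ENNReal.ofReal (g b - g a) := htend.liminf_eq
  calc ∫⁻ x in Set.Ioc a b, ENNReal.ofReal (deriv g x)
      = ∫⁻ x in Set.Ioc a b, liminf (fun n => φ n x) atTop := h1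
    _ ≤ liminf (fun n => ∫⁻ x in Set.Ioc a b, φ n x) atTop := h2
    _ ≤ ENNReal.ofReal (g b - g a) := h4

lemma abs_deriv_le_of_lipschitz {g : ℝ → ℝ} {K : ℝ≥0} (hg : LipschitzWith K g) (x : ℝ) :
    |deriv g x| ≤ K := by
  simpa [Real.norm_eq_abs] using norm_deriv_le_of_lipschitz hg (x₀ := x)

lemma integrableOn_deriv_of_lipschitz {g : ℝ → ℝ} {K : ℝ≥0} (hg : LipschitzWith K g)
    (a b : ℝ) : IntegrableOn (deriv g) (Set.Ioc a b) := by
  refine Integrable.mono' (g := fun _ => (K:ℝ)) (integrableOn_const measure_Ioc_lt_top.ne)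
    (measurable_deriv g).aestronglyMeasurable ?_
  exact Eventually.of_forall fun x => by
    simpa [Real.norm_eq_abs] using abs_deriv_le_of_lipschitz hg x

lemma lipschitz_setIntegral_deriv_le {g : ℝ → ℝ} {K : ℝ≥0} (hg : LipschitzWith K g)
    {a b : ℝ} (hab : a ≤ b) :
    ∫ x in Set.Ioc a b, deriv g x ≤ g b - g a := by
  set M : ℝ → ℝ := fun x => g x + K * x with hM
  have hmono : Monotone M := by
    intro u v huv
    have := hg.dist_le_mul u v
    rw [Real.dist_eq, Real.dist_eq] at this
    have h1 : g u - g v ≤ K * |u - v| := le_trans (le_abs_self _) this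
    rw [abs_of_nonpos (by linarith)] at h1
    simp only [hM]
    nlinarith
  have hcont : Continuous M := hg.continuous.add (continuous_const.mul continuous_id)
  have key := monotone_setLIntegral_deriv_le hmono hcont hab
  have haeM : ∀ᵐ x, deriv M x = deriv g x + K := by
    filter_upwards [hg.ae_differentiableAt_real] with x hx
    have h0 : deriv M x = deriv g x + deriv (fun y => (K:ℝ) * y) x :=
      deriv_add hx ((differentiable_id.const_mul (K:ℝ)) x)
    have hKd : deriv (fun y => (K:ℝ) * y) x = K := by
      simpa using ((hasDerivAt_id x).const_mul (K:ℝ)).deriv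
    rw [h0, hKd]
  have hint : IntegrableOn (fun x => deriv g x + K) (Set.Ioc a b) :=
    (integrableOn_deriv_of_lipschitz hg a b).add (integrableOn_const measure_Ioc_lt_top.ne)
  have hnn : ∀ x, 0 ≤ deriv g x + K := fun x => by
    have := abs_deriv_le_of_lipschitz hg x
    have := neg_le_of_abs_le this
    linarith
  have e1 : ∫⁻ x in Set.Ioc a b, ENNReal.ofReal (deriv M x)
      = ENNReal.ofReal (∫ x in Set.Ioc a b, (deriv g x + K)) := by
    rw [ofReal_integral_eq_lintegral_ofReal hint (Eventually.of_forall hnn)]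
    refine lintegral_congr_ae ?_
    filter_upwards [ae_restrict_of_ae haeM] with x hx
    rw [hx]
  rw [e1] at key
  have hMd : M b - M a = g b - g a + K * (b - a) := by simp only [hM]; ring
  have hrhs : (0:ℝ) ≤ M b - M a := sub_nonneg.2 (hmono hab)
  have key2 : ∫ x in Set.Ioc a b, (deriv g x + K) ≤ M b - M a :=
    (ENNReal.ofReal_le_ofReal_iff hrhs).1 key
  have e2 : ∫ x in Set.Ioc a b, (deriv g x + (K:ℝ))
      = (∫ x in Set.Ioc a b, deriv g x) + K * (b - a) := by
    rw [integral_add (integrableOn_deriv_of_lipschitz hg a b)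
      (integrableOn_const measure_Ioc_lt_top.ne)]
    simp [Real.volume_Ioc, ENNReal.toReal_ofReal (sub_nonneg.2 hab), max_eq_left (sub_nonneg.2 hab), mul_comm]
  rw [e2, hMd] at key2
  linarith

lemma lipschitz_setIntegral_deriv_eq {g : ℝ → ℝ} {K : ℝ≥0} (hg : LipschitzWith K g)
    {a b : ℝ} (hab : a ≤ b) :
    ∫ x in Set.Ioc a b, deriv g x = g b - g a := by
  have h1 := lipschitz_setIntegral_deriv_le hg hab
  have h2 := lipschitz_setIntegral_deriv_le (g := fun y => -g y) hg.neg hab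
  have e : ∀ x, deriv (fun y => -g y) x = -deriv g x := fun x => deriv.fun_neg
  rw [show (∫ x in Set.Ioc a b, deriv (fun y => -g y) x) = -∫ x in Set.Ioc a b, deriv g x by
    rw [← integral_neg]; exact integral_congr_ae (Eventually.of_forall fun x => e x)] at h2
  have h2' : g b - g a ≤ ∫ x in Set.Ioc a b, deriv g x := by linarith
  linarith
lemma slice_sq_bound_aux {f : ℝ → ℝ} (hf : LocallyLipschitz f) {t s : ℝ}
    (ht : t ∈ Set.Ioo (0:ℝ) 1) (hs : s ∈ Set.Ioo (0:ℝ) 1) (hts : t ≤ s) :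
    ENNReal.ofReal ((f s - f t) ^ 2)
      ≤ ∫⁻ r in Set.Ioo (0:ℝ) 1, ENNReal.ofReal ((deriv f r) ^ 2) := by
  obtain ⟨K, hK⟩ := exists_lipschitzOnWith_Icc hf 0 1
  obtain ⟨g, hgK, hfg⟩ := hK.extend_real
  have hIoc_sub : Set.Ioc t s ⊆ Set.Ioo (0:ℝ) 1 := fun x hx =>
    ⟨lt_trans ht.1 hx.1, lt_of_le_of_lt hx.2 hs.2⟩
  have hderivEq : ∀ x ∈ Set.Ioo (0:ℝ) 1, deriv g x = deriv f x := by
    intro x hx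
    have hnb : Set.Ioo (0:ℝ) 1 ∈ 𝓝 x := isOpen_Ioo.mem_nhds hx
    have : f =ᶠ[𝓝 x] g := eventually_of_mem hnb fun y hy => hfg (Set.mem_Icc_of_Ioo hy)
    exact (this.deriv_eq).symm
  have hvals : f s = g s ∧ f t = g t :=
    ⟨hfg (Set.mem_Icc_of_Ioo hs), hfg (Set.mem_Icc_of_Ioo ht)⟩
  -- FTC
  have hFTC : g s - g t = ∫ x in Set.Ioc t s, deriv g x :=
    (lipschitz_setIntegral_deriv_eq hgK hts).symm
  set X := ∫⁻ r in Set.Ioo (0:ℝ) 1, ENNReal.ofReal ((deriv f r) ^ 2) with hX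
  -- step: ofReal |g s - g t| ≤ X ^ (1/2 : ℝ)
  have step : ENNReal.ofReal |g s - g t| ≤ X ^ (1/2 : ℝ) := by
    have habs : |g s - g t| ≤ ∫ x in Set.Ioc t s, |deriv g x| := by
      rw [hFTC]
      simpa [Real.norm_eq_abs] using
        norm_integral_le_integral_norm (μ := volume.restrict (Set.Ioc t s)) (deriv g)
    have hint : IntegrableOn (fun x => |deriv g x|) (Set.Ioc t s) :=
      (integrableOn_deriv_of_lipschitz hgK t s).abs
    have e1 : ENNReal.ofReal (∫ x in Set.Ioc t s, |deriv g x|)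
        = ∫⁻ x in Set.Ioc t s, ENNReal.ofReal |deriv g x| :=
      ofReal_integral_eq_lintegral_ofReal hint (Eventually.of_forall fun x => abs_nonneg _)
    have hmeas : AEMeasurable (fun x => ENNReal.ofReal |deriv g x|)
        (volume.restrict (Set.Ioc t s)) :=
      (ENNReal.measurable_ofReal.comp (measurable_deriv g).abs).aemeasurable
    have hpq : Real.HolderConjugate 2 2 := Real.HolderConjugate.two_two
    have holder := ENNReal.lintegral_mul_le_Lp_mul_Lq (volume.restrict (Set.Ioc t s)) hpq
      hmeas aemeasurable_const (g := fun _ => (1 : ℝ≥0∞))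
    simp only [mul_one, ENNReal.one_rpow] at holder
    have hvol : volume (Set.Ioc t s) ≤ 1 := by
      rw [Real.volume_Ioc]
      exact ENNReal.ofReal_le_one.2 (by linarith [ht.1, hs.2])
    have hconst : ∫⁻ _ in Set.Ioc t s, (1:ℝ≥0∞) ^ (2:ℝ) = volume (Set.Ioc t s) := by
      simp
    have hf2 : ∀ x ∈ Set.Ioc t s, ENNReal.ofReal |deriv g x| ^ (2:ℝ)
        = ENNReal.ofReal ((deriv f x) ^ 2) := by
      intro x hx
      rw [show ((2:ℝ)) = ((2:ℕ):ℝ) by norm_num, ENNReal.rpow_natCast,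
        ← ENNReal.ofReal_pow (abs_nonneg _), sq_abs, hderivEq x (hIoc_sub hx)]
    have hfirst : ∫⁻ x in Set.Ioc t s, ENNReal.ofReal |deriv g x| ^ (2:ℝ) ≤ X := by
      rw [setLIntegral_congr_fun measurableSet_Ioc
        (fun x hx => hf2 x hx)]
      exact lintegral_mono_set hIoc_sub
    calc ENNReal.ofReal |g s - g t| ≤ ENNReal.ofReal (∫ x in Set.Ioc t s, |deriv g x|) :=
          ENNReal.ofReal_le_ofReal habs
      _ = ∫⁻ x in Set.Ioc t s, ENNReal.ofReal |deriv g x| := e1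
      _ ≤ (∫⁻ x in Set.Ioc t s, ENNReal.ofReal |deriv g x| ^ (2:ℝ)) ^ (1/2:ℝ)
            * (volume (Set.Ioc t s)) ^ (1/2:ℝ) := by
          have h' := holder
          simp only [Pi.mul_apply, mul_one] at h'
          rw [setLIntegral_one] at h'
          exact h'
      _ ≤ X ^ (1/2:ℝ) * 1 ^ (1/2:ℝ) := by
          gcongr
      _ = X ^ (1/2:ℝ) := by simp
  -- square both sides
  have hsq : ENNReal.ofReal ((f s - f t) ^ 2) = (ENNReal.ofReal |g s - g t|) ^ 2 := by
    rw [hvals.1, hvals.2, ← sq_abs, ENNReal.ofReal_pow (abs_nonneg _)]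
  rw [hsq]
  calc (ENNReal.ofReal |g s - g t|) ^ 2 ≤ (X ^ (1/2:ℝ)) ^ 2 := by gcongr
    _ = X := by
        rw [← ENNReal.rpow_natCast (X ^ (1/2:ℝ)) 2, ← ENNReal.rpow_mul]
        norm_num

lemma slice_sq_bound {f : ℝ → ℝ} (hf : LocallyLipschitz f) {t s : ℝ}
    (ht : t ∈ Set.Ioo (0:ℝ) 1) (hs : s ∈ Set.Ioo (0:ℝ) 1) :
    ENNReal.ofReal ((f s - f t) ^ 2)
      ≤ ∫⁻ r in Set.Ioo (0:ℝ) 1, ENNReal.ofReal ((deriv f r) ^ 2) := by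
  rcases le_total t s with hts | hst
  · exact slice_sq_bound_aux hf ht hs hts
  · have : (f s - f t) ^ 2 = (f t - f s) ^ 2 := by ring
    rw [this]
    exact slice_sq_bound_aux hf hs ht hst

end auxlemmas

/-- For piecewise differentiable `h : D^{n+1} → ℝ` (with `D^{n+1}`
identified with `D^n × (0,1)`), the `L²` distance of `h` to the translates of the profile
on `D^{n+1}` is bounded by the infimum over `t ∈ (0,1)` of the distance of the slice `h_t`
to the translates on `D^n`, plus `‖∂_t h‖_{L²(D^{n+1})}`. -/
theorem statement9 (n : ℕ) (F m : ℝ → ℝ) (hF : IsStdPotential F) (hm : IsProfile F m)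
    (h : (ℝ × (Fin n → ℝ)) × ℝ → ℝ) (hlip : LocallyLipschitz h) :
    (⨅ ξ : ℝ, (∫⁻ z in (domW n) ×ˢ Set.Ioo (0:ℝ) 1,
        ENNReal.ofReal ((h z - m (z.1.1 - ξ)) ^ 2)) ^ (1/2 : ℝ)) ≤
      (⨅ t : (Set.Ioo (0:ℝ) 1),
        ⨅ ξ : ℝ, (∫⁻ w in domW n,
          ENNReal.ofReal ((h (w, (t : ℝ)) - m (w.1 - ξ)) ^ 2)) ^ (1/2 : ℝ)) +
      (∫⁻ z in (domW n) ×ˢ Set.Ioo (0:ℝ) 1,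
        ENNReal.ofReal ((deriv (fun s => h (z.1, s)) z.2) ^ 2)) ^ (1/2 : ℝ) := by
  have hhc : Continuous h := hlip.continuous
  have hmc : Continuous m := by
    have : Differentiable ℝ m := fun x => (hm.ode x).differentiableAt
    exact this.continuous
  have rpow_two : ∀ x : ℝ≥0∞, x ^ (2:ℝ) = x ^ (2:ℕ) := fun x => by
    rw [show ((2:ℝ)) = ((2:ℕ):ℝ) by norm_num, ENNReal.rpow_natCast]
  have hre : (volume : Measure ((ℝ × (Fin n → ℝ)) × ℝ)).restrict ((domW n) ×ˢ Set.Ioo (0:ℝ) 1)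
      = ((volume : Measure (ℝ × (Fin n → ℝ))).restrict (domW n)).prod
        ((volume : Measure ℝ).restrict (Set.Ioo (0:ℝ) 1)) := by
    rw [Measure.volume_eq_prod, Measure.prod_restrict]
  -- joint measurability of the derivative term
  have hDc : Continuous (Function.uncurry (fun (w : ℝ × (Fin n → ℝ)) (s : ℝ) => h (w, s))) :=
    hhc.comp (continuous_fst.prodMk continuous_snd)
  have hDmeas : Measurable (fun z : (ℝ × (Fin n → ℝ)) × ℝ =>
      ENNReal.ofReal ((deriv (fun s => h (z.1, s)) z.2) ^ 2)) :=
    ENNReal.measurable_ofReal.comp ((measurable_deriv_with_param hDc).pow_const 2)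
  -- the key estimate
  have key : ∀ t : ℝ, t ∈ Set.Ioo (0:ℝ) 1 → ∀ ξ : ℝ,
      (∫⁻ z in (domW n) ×ˢ Set.Ioo (0:ℝ) 1,
        ENNReal.ofReal ((h z - m (z.1.1 - ξ)) ^ 2)) ^ (1/2 : ℝ) ≤
      (∫⁻ w in domW n,
          ENNReal.ofReal ((h (w, t) - m (w.1 - ξ)) ^ 2)) ^ (1/2 : ℝ) +
      (∫⁻ z in (domW n) ×ˢ Set.Ioo (0:ℝ) 1,
        ENNReal.ofReal ((deriv (fun s => h (z.1, s)) z.2) ^ 2)) ^ (1/2 : ℝ) := by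
    intro t ht ξ
    set Ffun : ((ℝ × (Fin n → ℝ)) × ℝ) → ℝ≥0∞ :=
      fun z => ENNReal.ofReal |h z - h (z.1, t)| with hFdef
    set Gfun : ((ℝ × (Fin n → ℝ)) × ℝ) → ℝ≥0∞ :=
      fun z => ENNReal.ofReal |h (z.1, t) - m (z.1.1 - ξ)| with hGdef
    have hFm : Measurable Ffun :=
      ENNReal.measurable_ofReal.comp
        ((hhc.sub (hhc.comp ((continuous_fst).prodMk continuous_const))).abs).measurable
    have hGm : Measurable Gfun :=
      ENNReal.measurable_ofReal.comp
        (((hhc.comp ((continuous_fst).prodMk continuous_const)).sub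
          (hmc.comp ((continuous_fst.comp continuous_fst).sub continuous_const))).abs).measurable
    have pointwise : ∀ z : (ℝ × (Fin n → ℝ)) × ℝ,
        ENNReal.ofReal ((h z - m (z.1.1 - ξ)) ^ 2) ≤ ((Ffun + Gfun) z) ^ (2:ℝ) := by
      intro z
      have e1 : ENNReal.ofReal ((h z - m (z.1.1 - ξ)) ^ 2)
          = (ENNReal.ofReal |h z - m (z.1.1 - ξ)|) ^ (2:ℕ) := by
        rw [← ENNReal.ofReal_pow (abs_nonneg _), sq_abs]
      have e2 : ENNReal.ofReal |h z - m (z.1.1 - ξ)| ≤ (Ffun + Gfun) z := by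
        refine le_trans (ENNReal.ofReal_le_ofReal (abs_sub_le (h z) (h (z.1, t))
          (m (z.1.1 - ξ)))) ?_
        exact ENNReal.ofReal_add_le
      rw [e1, rpow_two]
      gcongr
    have mink := ENNReal.lintegral_Lp_add_le (μ := volume.restrict ((domW n) ×ˢ Set.Ioo (0:ℝ) 1))
      hFm.aemeasurable hGm.aemeasurable (p := 2) one_le_two
    have step1 : (∫⁻ z in (domW n) ×ˢ Set.Ioo (0:ℝ) 1,
        ENNReal.ofReal ((h z - m (z.1.1 - ξ)) ^ 2)) ^ (1/2 : ℝ)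
        ≤ (∫⁻ z in (domW n) ×ˢ Set.Ioo (0:ℝ) 1, ((Ffun + Gfun) z) ^ (2:ℝ)) ^ (1/2 : ℝ) := by
      exact ENNReal.rpow_le_rpow (lintegral_mono pointwise) (by norm_num)
    -- G term equality
    have Gterm : (∫⁻ z in (domW n) ×ˢ Set.Ioo (0:ℝ) 1, Gfun z ^ (2:ℝ))
        = ∫⁻ w in domW n, ENNReal.ofReal ((h (w, t) - m (w.1 - ξ)) ^ 2) := by
      have e : ∀ z : (ℝ × (Fin n → ℝ)) × ℝ, Gfun z ^ (2:ℝ)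
          = ENNReal.ofReal ((h (z.1, t) - m (z.1.1 - ξ)) ^ 2) := by
        intro z
        rw [rpow_two, hGdef, ← ENNReal.ofReal_pow (abs_nonneg _), sq_abs]
      have hGc : Continuous (fun z : (ℝ × (Fin n → ℝ)) × ℝ =>
          (h (z.1, t) - m (z.1.1 - ξ)) ^ 2) :=
        ((hhc.comp ((continuous_fst).prodMk continuous_const)).sub
          (hmc.comp ((continuous_fst.comp continuous_fst).sub continuous_const))).pow 2
      rw [lintegral_congr e, hre,
        lintegral_prod (fun z => ENNReal.ofReal ((h (z.1, t) - m (z.1.1 - ξ)) ^ 2))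
          (ENNReal.measurable_ofReal.comp hGc.measurable).aemeasurable]
      simp [lintegral_const, Measure.restrict_apply_univ, Real.volume_Ioo]
    -- F term bound
    have Fterm : (∫⁻ z in (domW n) ×ˢ Set.Ioo (0:ℝ) 1, Ffun z ^ (2:ℝ))
        ≤ ∫⁻ z in (domW n) ×ˢ Set.Ioo (0:ℝ) 1,
          ENNReal.ofReal ((deriv (fun s => h (z.1, s)) z.2) ^ 2) := by
      have e : ∀ z : (ℝ × (Fin n → ℝ)) × ℝ, Ffun z ^ (2:ℝ)
          = ENNReal.ofReal ((h z - h (z.1, t)) ^ 2) := by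
        intro z
        rw [rpow_two, hFdef, ← ENNReal.ofReal_pow (abs_nonneg _), sq_abs]
      have hFc : Continuous (fun z : (ℝ × (Fin n → ℝ)) × ℝ => (h z - h (z.1, t)) ^ 2) :=
        (hhc.sub (hhc.comp ((continuous_fst).prodMk continuous_const))).pow 2
      rw [lintegral_congr e, hre,
        lintegral_prod (fun z => ENNReal.ofReal ((h z - h (z.1, t)) ^ 2))
          (ENNReal.measurable_ofReal.comp hFc.measurable).aemeasurable,
        lintegral_prod (fun z => ENNReal.ofReal ((deriv (fun s => h (z.1, s)) z.2) ^ 2))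
          hDmeas.aemeasurable]
      refine lintegral_mono fun w => ?_
      have hfw : LocallyLipschitz (fun s : ℝ => h (w, s)) :=
        hlip.comp (LipschitzWith.prodMk_left w).locallyLipschitz
      calc ∫⁻ s in Set.Ioo (0:ℝ) 1, ENNReal.ofReal ((h (w, s) - h (w, t)) ^ 2)
          ≤ ∫⁻ _ in Set.Ioo (0:ℝ) 1,
            (∫⁻ r in Set.Ioo (0:ℝ) 1,
              ENNReal.ofReal ((deriv (fun s : ℝ => h (w, s)) r) ^ 2)) := by
            refine setLIntegral_mono' measurableSet_Ioo fun s hs => ?_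
            exact slice_sq_bound hfw ht hs
        _ = ∫⁻ r in Set.Ioo (0:ℝ) 1,
              ENNReal.ofReal ((deriv (fun s : ℝ => h (w, s)) r) ^ 2) := by
            simp [lintegral_const, Measure.restrict_apply_univ, Real.volume_Ioo]
    calc (∫⁻ z in (domW n) ×ˢ Set.Ioo (0:ℝ) 1,
        ENNReal.ofReal ((h z - m (z.1.1 - ξ)) ^ 2)) ^ (1/2 : ℝ)
        ≤ (∫⁻ z in (domW n) ×ˢ Set.Ioo (0:ℝ) 1, ((Ffun + Gfun) z) ^ (2:ℝ)) ^ (1/2 : ℝ) := step1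
      _ ≤ (∫⁻ z in (domW n) ×ˢ Set.Ioo (0:ℝ) 1, Ffun z ^ (2:ℝ)) ^ (1/2 : ℝ)
            + (∫⁻ z in (domW n) ×ˢ Set.Ioo (0:ℝ) 1, Gfun z ^ (2:ℝ)) ^ (1/2 : ℝ) := mink
      _ ≤ (∫⁻ z in (domW n) ×ˢ Set.Ioo (0:ℝ) 1,
              ENNReal.ofReal ((deriv (fun s => h (z.1, s)) z.2) ^ 2)) ^ (1/2 : ℝ)
            + (∫⁻ w in domW n,
              ENNReal.ofReal ((h (w, t) - m (w.1 - ξ)) ^ 2)) ^ (1/2 : ℝ) := by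
          rw [Gterm]
          gcongr
      _ = _ := by rw [add_comm]
  rw [ENNReal.iInf_add]
  refine le_iInf fun t => ?_
  rw [ENNReal.iInf_add]
  refine le_iInf fun ξ => ?_
  exact (iInf_le _ ξ).trans (key t t.2 ξ)


end
end

section
/- Let E be a finite-dimensional Euclidean space with Lebesgue measure 𝓛 and codimension-1 Hausdorff measure 𝓗, let a*(·) = ⟨a, ·⟩ be a nonzero linear form on E, and let x ↦ ⟨x, Σx⟩ be a symmetric positive definite bilinear form. For b ∈ ℝ and δ, ρ > 0 set B̃^{b,δ²,ρ} = { x ∈ E : a*(x) = b, ⟨x, Σx⟩ ≤ δ², ‖x‖_∞ < ρ } and B̃^{δ²,ρ} = { x ∈ E : ⟨x, Σx⟩ ≤ δ², ‖x‖_∞ < ρ }. Set l² = inf{ ⟨x, Σx⟩ : a*(x) = b } and let n be the Σ-unit normal to the hyperplane {a* = 0} (i.e. ⟨n, Σx⟩ = 0 for all x with a*(x) = 0 and ⟨n, Σn⟩ = 1), and assume ‖n‖_∞ ≤ 1. Then ∫_{B̃^{δ²−l², 1−2δ}} exp(−⟨x, Σx⟩) 𝓛(dx) ≤ ( 2δ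 e^{l²} / ⟨Σn, Σn⟩^{1/2} ) ∫_{B̃^{b,δ²,1}} exp(−⟨x, Σx⟩) 𝓗(dx). Moreover l² = b² / ⟨a, Σ^{-1}a⟩, ⟨a, Σ^{-1}a⟩ = ( sup{ a*(η) : ⟨η, Ση⟩ = 1 } )², n = ± Σ^{-1}a / √(⟨a, Σ^{-1}a⟩), and ⟨Σn, Σn⟩ = ⟨a, Σ^{-1}a⟩^{-1} ( sup{ a*(η) : ⟨η, η⟩ = 1 } )². -/
open MeasureTheory Real Filter Topology
open scoped ENNReal RealInnerProductSpace

noncomputable section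



variable {N : ℕ}

section Alg
variable (S : EuclideanSpace ℝ (Fin N) →L[ℝ] EuclideanSpace ℝ (Fin N))
    (hsymm : ∀ x y : EuclideanSpace ℝ (Fin N), ⟪S x, y⟫ = ⟪x, S y⟫)
    (hpos : ∀ x : EuclideanSpace ℝ (Fin N), x ≠ 0 → 0 < ⟪x, S x⟫)

include hpos in
theorem q_nonneg (x : EuclideanSpace ℝ (Fin N)) : 0 ≤ ⟪x, S x⟫ := by
  rcases eq_or_ne x 0 with rfl | h
  · simp
  · exact (hpos x h).le

include hpos in
theorem S_inj : Function.Injective S := by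
  have : ∀ x, S x = 0 → x = 0 := by
    intro x hx
    by_contra h
    have := hpos x h
    rw [hx] at this; simp at this
  intro x y hxy
  have : S (x - y) = 0 := by simp [map_sub, hxy]
  have := this; have hxy0 := ‹∀ x, S x = 0 → x = 0› _ this
  exact sub_eq_zero.mp hxy0

include hsymm in
theorem q_expand (z w : EuclideanSpace ℝ (Fin N)) :
    ⟪z + w, S (z + w)⟫ = ⟪z, S z⟫ + 2 * ⟪w, S z⟫ + ⟪w, S w⟫ := by
  have h1 : ⟪z, S w⟫ = ⟪w, S z⟫ := by
    rw [← hsymm z w, real_inner_comm]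
  simp only [map_add, inner_add_left, inner_add_right]
  ring_nf
  rw [h1]; ring

include hsymm hpos in
theorem q_cauchy (z w : EuclideanSpace ℝ (Fin N)) :
    ⟪z, S w⟫ ^ 2 ≤ ⟪z, S z⟫ * ⟪w, S w⟫ := by
  rcases eq_or_ne w 0 with rfl | hw
  · simp
  · have hqw : 0 < ⟪w, S w⟫ := hpos w hw
    have h := q_nonneg S hpos (z + (-(⟪z, S w⟫ / ⟪w, S w⟫)) • w)
    rw [q_expand S hsymm] at h
    rw [inner_smul_left, _root_.map_smul, inner_smul_left, inner_smul_right] at h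
    have h1 : ⟪w, S z⟫ = ⟪z, S w⟫ := by rw [← hsymm z w, real_inner_comm]
    rw [h1] at h
    simp only [RCLike.star_def, starRingEnd_apply, star_trivial] at h
    have key : ∀ qz t qw : ℝ, 0 < qw →
        0 ≤ qz + 2 * (-(t / qw) * t) + -(t / qw) * (-(t / qw) * qw) → t ^ 2 ≤ qz * qw := by
      intro qz t qw h0 hh
      have h' : 0 ≤ qz - t ^ 2 / qw := by
        have e : qz + 2 * (-(t / qw) * t) + -(t / qw) * (-(t / qw) * qw)
            = qz - t ^ 2 / qw := by field_simp; ring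
        linarith [e ▸ hh]
      have := mul_le_mul_of_nonneg_right (by linarith : t ^ 2 / qw ≤ qz) h0.le
      rw [div_mul_cancel₀ _ h0.ne'] at this
      linarith
    exact key _ _ _ hqw h

end Alg

section Struct
variable (S : EuclideanSpace ℝ (Fin N) →L[ℝ] EuclideanSpace ℝ (Fin N))
    (hsymm : ∀ x y : EuclideanSpace ℝ (Fin N), ⟪S x, y⟫ = ⟪x, S y⟫)
    (hpos : ∀ x : EuclideanSpace ℝ (Fin N), x ≠ 0 → 0 < ⟪x, S x⟫)
    (av : EuclideanSpace ℝ (Fin N)) (hav : av ≠ 0)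
    (a' : EuclideanSpace ℝ (Fin N)) (ha' : S a' = av)
    (nv : EuclideanSpace ℝ (Fin N))
    (hn_orth : ∀ x : EuclideanSpace ℝ (Fin N), ⟪av, x⟫ = 0 → ⟪nv, S x⟫ = 0)
    (hn_unit : ⟪nv, S nv⟫ = 1)

include hpos hav ha' in
theorem p_pos : 0 < ⟪av, a'⟫ := by
  have ha'0 : a' ≠ 0 := by
    rintro rfl; rw [map_zero] at ha'; exact hav ha'.symm
  have := hpos a' ha'0
  rw [← ha', real_inner_comm]
  rwa [ha'] at this ⊢

include hsymm hpos hav ha' hn_orth hn_unit in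
theorem nv_structure : ∃ c : ℝ, S nv = c • av ∧ nv = c • a' ∧ c ^ 2 * ⟪av, a'⟫ = 1 := by
  set c : ℝ := ⟪S nv, av⟫ / ‖av‖ ^ 2 with hc
  have hav2 : (0:ℝ) < ‖av‖ ^ 2 := by
    have := norm_pos_iff.mpr hav
    positivity
  set p := S nv - c • av with hp
  have havp : ⟪av, p⟫ = 0 := by
    simp only [hp, inner_sub_right, inner_smul_right]
    rw [real_inner_self_eq_norm_sq, real_inner_comm (S nv) av, hc]
    field_simp
    ring
  have hSnvp : ⟪S nv, p⟫ = 0 := by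
    have h1 : ⟪nv, S p⟫ = 0 := hn_orth p havp
    rwa [← hsymm nv p] at h1
  have hpp : ⟪p, p⟫ = 0 := by
    have : ⟪p, p⟫ = ⟪S nv, p⟫ - c * ⟪av, p⟫ := by
      simp only [hp, inner_sub_left, inner_smul_left, RCLike.star_def, starRingEnd_apply, star_trivial]
    rw [this, hSnvp, havp]; ring
  have hp0 : p = 0 := by
    rwa [inner_self_eq_zero] at hpp
  have hSnv : S nv = c • av := sub_eq_zero.mp hp0
  have hnv : nv = c • a' := by
    apply S_inj S hpos
    rw [hSnv, ContinuousLinearMap.map_smul, ha']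
  refine ⟨c, hSnv, hnv, ?_⟩
  have h1 : (1:ℝ) = c ^ 2 * ⟪av, a'⟫ := by
    rw [← hn_unit]
    nth_rewrite 1 [hnv]; rw [hSnv]
    rw [inner_smul_left, inner_smul_right]
    simp only [RCLike.star_def, starRingEnd_apply, star_trivial]
    rw [real_inner_comm a' av]; ring
  linarith
end Struct

section Parts
variable (S : EuclideanSpace ℝ (Fin N) →L[ℝ] EuclideanSpace ℝ (Fin N))
    (hsymm : ∀ x y : EuclideanSpace ℝ (Fin N), ⟪S x, y⟫ = ⟪x, S y⟫)
    (hpos : ∀ x : EuclideanSpace ℝ (Fin N), x ≠ 0 → 0 < ⟪x, S x⟫)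
    (av : EuclideanSpace ℝ (Fin N)) (hav : av ≠ 0)
    (nv : EuclideanSpace ℝ (Fin N))
    (hn_orth : ∀ x : EuclideanSpace ℝ (Fin N), ⟪av, x⟫ = 0 → ⟪nv, S x⟫ = 0)
    (hn_unit : ⟪nv, S nv⟫ = 1)
    {t0 : ℝ} (ht0 : ⟪av, nv⟫ = t0) (ht0ne : t0 ≠ 0)

include hsymm hn_orth hn_unit ht0 ht0ne in
theorem q_decomp (x : EuclideanSpace ℝ (Fin N)) :
    ⟪x, S x⟫ = ⟪x - (⟪av, x⟫ / t0) • nv, S (x - (⟪av, x⟫ / t0) • nv)⟫ + (⟪av, x⟫ / t0) ^ 2 := by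
  set s : ℝ := ⟪av, x⟫ / t0 with hs
  set z := x - s • nv with hz
  have hx : x = z + s • nv := by rw [hz]; abel
  have havz : ⟪av, z⟫ = 0 := by
    rw [hz, inner_sub_right, inner_smul_right, ht0, hs]
    field_simp
    ring
  have horth : ⟪nv, S z⟫ = 0 := hn_orth z havz
  rw [hx, q_expand S hsymm]
  rw [inner_smul_left, _root_.map_smul, inner_smul_right, inner_smul_left, horth]
  simp only [RCLike.star_def, starRingEnd_apply, star_trivial]
  rw [hn_unit]; ring

include hsymm hpos hn_orth hn_unit ht0 ht0ne in
theorem part2 (b : ℝ) :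
    sInf {r : ℝ | ∃ x : EuclideanSpace ℝ (Fin N), ⟪av, x⟫ = b ∧ r = ⟪x, S x⟫}
      = b ^ 2 / t0 ^ 2 := by
  apply IsLeast.csInf_eq
  constructor
  · refine ⟨(b / t0) • nv, ?_, ?_⟩
    · rw [inner_smul_right, ht0]; field_simp
    · rw [inner_smul_left, _root_.map_smul, inner_smul_right]
      simp only [RCLike.star_def, starRingEnd_apply, star_trivial]
      rw [hn_unit]
      field_simp
  · rintro r ⟨x, hxb, rfl⟩
    rw [q_decomp S hsymm av nv hn_orth hn_unit ht0 ht0ne x, hxb]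
    have := q_nonneg S hpos (x - (b / t0) • nv)
    have hb : (b / t0) ^ 2 = b ^ 2 / t0 ^ 2 := by ring
    linarith


include hsymm hpos hav in
theorem part3 (a' : EuclideanSpace ℝ (Fin N)) (ha' : S a' = av) (hp : 0 < ⟪av, a'⟫) :
    sSup {r : ℝ | ∃ η : EuclideanSpace ℝ (Fin N), ⟪η, S η⟫ = 1 ∧ r = ⟪av, η⟫}
      = Real.sqrt ⟪av, a'⟫ := by
  have hsq : Real.sqrt ⟪av, a'⟫ * Real.sqrt ⟪av, a'⟫ = ⟪av, a'⟫ :=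
    Real.mul_self_sqrt hp.le
  have hsqpos : 0 < Real.sqrt ⟪av, a'⟫ := Real.sqrt_pos.mpr hp
  have haa : ⟪a', S a'⟫ = ⟪av, a'⟫ := by rw [ha', real_inner_comm]
  apply IsGreatest.csSup_eq
  constructor
  · refine ⟨(Real.sqrt ⟪av, a'⟫)⁻¹ • a', ?_, ?_⟩
    · rw [inner_smul_left, _root_.map_smul, inner_smul_right]
      simp only [RCLike.star_def, starRingEnd_apply, star_trivial]
      rw [haa]
      rw [show ((Real.sqrt ⟪av, a'⟫)⁻¹ * ((Real.sqrt ⟪av, a'⟫)⁻¹ * ⟪av, a'⟫) : ℝ)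
        = ⟪av, a'⟫ / (Real.sqrt ⟪av, a'⟫ * Real.sqrt ⟪av, a'⟫) by ring, hsq]
      exact div_self hp.ne'
    · rw [inner_smul_right]
      nth_rewrite 3 [← hsq]
      rw [inv_mul_cancel_left₀ hsqpos.ne']
  · rintro r ⟨η, hη1, rfl⟩
    have h1 : ⟪av, η⟫ = ⟪a', S η⟫ := by rw [← ha', hsymm]
    have h2 : ⟪a', S η⟫ ^ 2 ≤ ⟪av, a'⟫ := by
      have := q_cauchy S hsymm hpos a' η
      rw [hη1, haa] at this
      linarith
    calc ⟪av, η⟫ ≤ |⟪av, η⟫| := le_abs_self _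
    _ = Real.sqrt (⟪av, η⟫ ^ 2) := (Real.sqrt_sq_eq_abs _).symm
    _ ≤ Real.sqrt ⟪av, a'⟫ := Real.sqrt_le_sqrt (by rw [h1]; exact h2)

include hav in
theorem part5sup :
    sSup {r : ℝ | ∃ η : EuclideanSpace ℝ (Fin N), ‖η‖ = 1 ∧ r = ⟪av, η⟫} = ‖av‖ := by
  have hn : 0 < ‖av‖ := norm_pos_iff.mpr hav
  apply IsGreatest.csSup_eq
  constructor
  · refine ⟨‖av‖⁻¹ • av, ?_, ?_⟩
    · rw [norm_smul, norm_inv, norm_norm, inv_mul_cancel₀ hn.ne']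
    · rw [real_inner_smul_right, real_inner_self_eq_norm_sq]
      rw [show (‖av‖⁻¹ * ‖av‖ ^ 2 : ℝ) = ‖av‖ * (‖av‖ / ‖av‖) by ring,
        div_self hn.ne', mul_one]
  · rintro r ⟨η, hη1, rfl⟩
    calc ⟪av, η⟫ ≤ ‖av‖ * ‖η‖ := real_inner_le_norm _ _
    _ = ‖av‖ := by rw [hη1, mul_one]


include hsymm hn_orth hn_unit in
theorem q_shift (z : EuclideanSpace ℝ (Fin N)) (hz : ⟪av, z⟫ = 0) (r : ℝ) :
    ⟪z + r • nv, S (z + r • nv)⟫ = ⟪z, S z⟫ + r ^ 2 := by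
  rw [q_expand S hsymm]
  rw [inner_smul_left, _root_.map_smul, inner_smul_right, inner_smul_left, hn_orth z hz]
  simp only [RCLike.star_def, starRingEnd_apply, star_trivial]
  rw [hn_unit]; ring

end Parts

theorem coord_le_norm {n : ℕ} (v : EuclideanSpace ℝ (Fin n)) (i : Fin n) : |v i| ≤ ‖v‖ := by
  rw [EuclideanSpace.norm_eq]
  calc |v i| = Real.sqrt (‖v i‖ ^ 2) := by
        rw [Real.sqrt_sq_eq_abs, Real.norm_eq_abs, abs_abs]
    _ ≤ Real.sqrt (∑ j, ‖v j‖ ^ 2) := by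
        refine Real.sqrt_le_sqrt ?_
        exact Finset.single_le_sum (fun j _ => sq_nonneg ‖v j‖) (Finset.mem_univ i)

section Main

set_option maxHeartbeats 2000000 in
theorem part1 (M : ℕ)
    (S : EuclideanSpace ℝ (Fin (M+1)) →L[ℝ] EuclideanSpace ℝ (Fin (M+1)))
    (hsymm : ∀ x y : EuclideanSpace ℝ (Fin (M+1)), ⟪S x, y⟫ = ⟪x, S y⟫)
    (hpos : ∀ x : EuclideanSpace ℝ (Fin (M+1)), x ≠ 0 → 0 < ⟪x, S x⟫)
    (av : EuclideanSpace ℝ (Fin (M+1))) (hav : av ≠ 0) (b : ℝ)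
    (a' : EuclideanSpace ℝ (Fin (M+1))) (ha' : S a' = av)
    (nv : EuclideanSpace ℝ (Fin (M+1)))
    (hn_orth : ∀ x : EuclideanSpace ℝ (Fin (M+1)), ⟪av, x⟫ = 0 → ⟪nv, S x⟫ = 0)
    (hn_unit : ⟪nv, S nv⟫ = 1)
    (hn_sup : ∀ i, |nv i| ≤ 1)
    (δ : ℝ) (hδ : 0 < δ)
    (l2 : ℝ) (hl2 : l2 = sInf {r : ℝ | ∃ x : EuclideanSpace ℝ (Fin (M+1)),
      ⟪av, x⟫ = b ∧ r = ⟪x, S x⟫}) :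
    ((∫ x in {x : EuclideanSpace ℝ (Fin (M+1)) |
          ⟪x, S x⟫ ≤ δ ^ 2 - l2 ∧ ∀ i, |x i| < 1 - 2*δ},
        Real.exp (-⟪x, S x⟫)) ≤
      (2 * δ * Real.exp l2 / Real.sqrt ⟪S nv, S nv⟫) *
        ∫ x in {x : EuclideanSpace ℝ (Fin (M+1)) |
            ⟪av, x⟫ = b ∧ ⟪x, S x⟫ ≤ δ ^ 2 ∧ ∀ i, |x i| < 1},
          Real.exp (-⟪x, S x⟫) ∂(μH[(M : ℝ)])) := by
  classical
  obtain ⟨c, hSnv, hnv, hc2⟩ := nv_structure S hsymm hpos av hav a' ha' nv hn_orth hn_unit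
  have hp : 0 < ⟪av, a'⟫ := p_pos S hpos av hav a' ha'
  have hcne : c ≠ 0 := by
    intro h; rw [h] at hc2; simp at hc2
  set t0 : ℝ := c * ⟪av, a'⟫ with ht0def
  have ht0 : ⟪av, nv⟫ = t0 := by rw [hnv, inner_smul_right]
  have ht0sq : t0 ^ 2 = ⟪av, a'⟫ := by
    rw [ht0def]; nlinarith
  have ht0ne : t0 ≠ 0 := by
    intro h; rw [h] at ht0sq; simp at ht0sq; nlinarith
  have hnorm_av : (0:ℝ) < ‖av‖ := norm_pos_iff.mpr hav
  -- value of l2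
  have hl2' : l2 = b ^ 2 / t0 ^ 2 := by
    rw [hl2, part2 S hsymm hpos av nv hn_orth hn_unit ht0 ht0ne b]
  set β : ℝ := b / t0 with hβdef
  have hβsq : β ^ 2 = l2 := by rw [hl2', hβdef]; ring
  have hl2nn : 0 ≤ l2 := by rw [← hβsq]; positivity
  -- the normal's coordinate
  set ν₀ : ℝ := t0 / ‖av‖ with hν₀def
  have hν₀ne : ν₀ ≠ 0 := by
    rw [hν₀def]; exact div_ne_zero ht0ne hnorm_av.ne'
  -- constant identification
  have hSnvSnv : ⟪S nv, S nv⟫ = c ^ 2 * ‖av‖ ^ 2 := by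
    rw [hSnv, inner_smul_left, inner_smul_right, real_inner_self_eq_norm_sq]
    simp only [RCLike.star_def, starRingEnd_apply, star_trivial]
    ring
  have habs2 : |c| * |c| * ⟪av, a'⟫ = 1 := by
    rw [abs_mul_abs_self]; nlinarith
  have hcabs : 0 < |c| := abs_pos.mpr hcne
  have hsqrtSnv : Real.sqrt ⟪S nv, S nv⟫ = |c| * ‖av‖ := by
    rw [hSnvSnv, show c ^ 2 * ‖av‖ ^ 2 = (|c| * ‖av‖) ^ 2 by rw [mul_pow, sq_abs],
      Real.sqrt_sq (by positivity)]
  have hν₀abs : |ν₀| = |c| * ⟪av, a'⟫ / ‖av‖ := by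
    rw [hν₀def, abs_div, abs_of_pos hnorm_av, ht0def, abs_mul, abs_of_pos hp]
  have hconst : 2 * δ * Real.exp l2 / Real.sqrt ⟪S nv, S nv⟫
      = 2 * δ * Real.exp l2 * |ν₀| := by
    rw [hsqrtSnv, hν₀abs]
    rw [div_eq_iff (by positivity)]
    generalize hP : (⟪av, a'⟫ : ℝ) = p at habs2 ⊢
    field_simp
    linear_combination (-1 : ℝ) * habs2
  -- orthonormal basis adapted to `av`
  set e : EuclideanSpace ℝ (Fin (M+1)) := ‖av‖⁻¹ • av with hedef
  have he_norm : ‖e‖ = 1 := by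
    rw [hedef, norm_smul, norm_inv, norm_norm, inv_mul_cancel₀ hnorm_av.ne']
  obtain ⟨b0, hb00⟩ : ∃ b0 : OrthonormalBasis (Fin (M+1)) ℝ (EuclideanSpace ℝ (Fin (M+1))),
      b0 0 = e := by
    have hcard : Module.finrank ℝ (EuclideanSpace ℝ (Fin (M+1))) = Fintype.card (Fin (M+1)) := by
      simp
    have horth : Orthonormal ℝ (({0} : Set (Fin (M+1))).restrict (fun _ => e)) := by
      constructor
      · intro i; exact he_norm
      · rintro ⟨i, hi⟩ ⟨j, hj⟩ hij
        simp only [Set.mem_singleton_iff] at hi hj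
        exact absurd (Subtype.ext (hi.trans hj.symm)) hij
    obtain ⟨b0, hb0⟩ := horth.exists_orthonormalBasis_extension_of_card_eq hcard
    exact ⟨b0, hb0 0 rfl⟩
  set φ := b0.repr with hφdef
  have hφ0 : ∀ x, φ x 0 = ‖av‖⁻¹ * ⟪av, x⟫ := by
    intro x
    rw [hφdef, b0.repr_apply_apply, hb00, hedef, real_inner_smul_left]
  have hφnv0 : φ nv 0 = ν₀ := by
    rw [hφ0, ht0, hν₀def, inv_mul_eq_div]
  -- sets and integrand
  set A : Set (EuclideanSpace ℝ (Fin (M+1))) :=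
    {x : EuclideanSpace ℝ (Fin (M+1)) | ⟪x, S x⟫ ≤ δ ^ 2 - l2 ∧ ∀ i, |x i| < 1 - 2*δ}
    with hAdef
  set B : Set (EuclideanSpace ℝ (Fin (M+1))) :=
    {x : EuclideanSpace ℝ (Fin (M+1)) | ⟪av, x⟫ = b ∧ ⟪x, S x⟫ ≤ δ ^ 2 ∧ ∀ i, |x i| < 1}
    with hBdef
  set g : EuclideanSpace ℝ (Fin (M+1)) → ℝ≥0∞ :=
    fun y => ENNReal.ofReal (Real.exp (-⟪y, S y⟫)) with hgdef
  have hqcont : Continuous fun x : EuclideanSpace ℝ (Fin (M+1)) => ⟪x, S x⟫ :=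
    continuous_id.inner S.continuous
  have hexpcont : Continuous fun x : EuclideanSpace ℝ (Fin (M+1)) => Real.exp (-⟪x, S x⟫) :=
    Real.continuous_exp.comp hqcont.neg
  have hg_meas : Measurable g := ENNReal.measurable_ofReal.comp hexpcont.measurable
  have hcoord : ∀ i, Measurable fun x : EuclideanSpace ℝ (Fin (M+1)) => x i := fun i =>
    (measurable_pi_apply i).comp (WithLp.measurable_ofLp 2 _)
  have hA_m : MeasurableSet A := by
    have : A = {x : EuclideanSpace ℝ (Fin (M+1)) | ⟪x, S x⟫ ≤ δ ^ 2 - l2}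
        ∩ ⋂ i, {x : EuclideanSpace ℝ (Fin (M+1)) | |x i| < 1 - 2*δ} := by
      ext x; simp [hAdef, Set.mem_iInter]
    rw [this]
    refine (measurableSet_le hqcont.measurable measurable_const).inter
      (MeasurableSet.iInter fun i => measurableSet_lt ((hcoord i).abs)
        measurable_const)
  have hB_m : MeasurableSet B := by
    have : B = {x : EuclideanSpace ℝ (Fin (M+1)) | ⟪av, x⟫ = b}
        ∩ ({x : EuclideanSpace ℝ (Fin (M+1)) | ⟪x, S x⟫ ≤ δ ^ 2}
          ∩ ⋂ i, {x : EuclideanSpace ℝ (Fin (M+1)) | |x i| < 1}) := by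
      ext x; simp [hBdef, Set.mem_iInter]
    rw [this]
    refine (measurableSet_eq_fun (continuous_const.inner continuous_id).measurable
        measurable_const).inter
      ((measurableSet_le hqcont.measurable measurable_const).inter
        (MeasurableSet.iInter fun i => measurableSet_lt ((hcoord i).abs)
          measurable_const))
  -- maps
  set pe := MeasurableEquiv.piFinSuccAbove (fun _ : Fin (M+1) => ℝ) 0 with hpedef
  set meq := (MeasurableEquiv.toLp 2 (Fin (M+1) → ℝ)).symm with hmeqdef
  set Ψ : ℝ × (Fin M → ℝ) → EuclideanSpace ℝ (Fin (M+1)) :=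
    fun z => φ.symm (meq.symm (pe.symm z)) with hΨdef
  have hΨ0 : ∀ z : ℝ × (Fin M → ℝ), φ (Ψ z) 0 = z.1 := by
    intro z
    rw [hΨdef]
    show φ (φ.symm _) 0 = z.1
    rw [LinearIsometryEquiv.apply_symm_apply]
    show (pe.symm z) 0 = z.1
    simp [hpedef, MeasurableEquiv.piFinSuccAbove]
  have hΨsucc : ∀ (z : ℝ × (Fin M → ℝ)) (j : Fin M), φ (Ψ z) (Fin.succ j) = z.2 j := by
    intro z j
    rw [hΨdef]
    show φ (φ.symm _) (Fin.succ j) = z.2 j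
    rw [LinearIsometryEquiv.apply_symm_apply]
    show (pe.symm z) (Fin.succ j) = z.2 j
    simp [hpedef, MeasurableEquiv.piFinSuccAbove]
  set nt : Fin M → ℝ := fun j => φ nv (Fin.succ j) with hntdef
  set P : (Fin M → ℝ) → EuclideanSpace ℝ (Fin (M+1)) := fun w => Ψ (β * ν₀, w) with hPdef
  have hP_meas : Measurable P := by
    rw [hPdef, hΨdef]
    exact (φ.symm.continuous.measurable.comp meq.symm.measurable).comp
      (pe.symm.measurable.comp (measurable_const.prodMk measurable_id))
  -- the key pointwise estimate
  have key : ∀ (u : ℝ) (w : Fin M → ℝ),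
      A.indicator g (Ψ (u, w + (u / ν₀) • nt))
        ≤ (Set.Icc (-(δ * |ν₀|)) (δ * |ν₀|)).indicator (fun _ => (1:ℝ≥0∞)) u
          * (ENNReal.ofReal (Real.exp l2) * B.indicator g (P (w + β • nt))) := by
    intro u w
    by_cases hxA : Ψ (u, w + (u / ν₀) • nt) ∈ A
    · set x := Ψ (u, w + (u / ν₀) • nt) with hxdef
      set s : ℝ := u / ν₀ with hsdef
      have hu : u = s * ν₀ := by rw [hsdef, div_mul_cancel₀ _ hν₀ne]
      have hx0 : φ x 0 = u := hΨ0 _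
      have hxsucc : ∀ j, φ x (Fin.succ j) = w j + s * nt j := by
        intro j
        rw [hxdef, hΨsucc]
        simp
      set z := x - s • nv with hzdef
      have hz0 : φ z 0 = 0 := by
        rw [hzdef, map_sub, _root_.map_smul]
        have : (φ x - s • φ nv) 0 = φ x 0 - s * φ nv 0 := by simp
        rw [this, hx0, hφnv0, hu]
        ring
      have havz : ⟪av, z⟫ = 0 := by
        have h := hφ0 z
        rw [hz0] at h
        have := h.symm
        rcases mul_eq_zero.mp this with h1 | h2
        · exact absurd h1 (inv_ne_zero hnorm_av.ne')
        · exact h2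
      have hxz : x = z + s • nv := by rw [hzdef]; abel
      have hqx : ⟪x, S x⟫ = ⟪z, S z⟫ + s ^ 2 := by
        have h := q_shift S hsymm av nv hn_orth hn_unit z havz s
        rw [← hxz] at h
        exact h
      set y := z + β • nv with hydef
      have hqy : ⟪y, S y⟫ = ⟪z, S z⟫ + β ^ 2 :=
        q_shift S hsymm av nv hn_orth hn_unit z havz β
      have hqznn : 0 ≤ ⟪z, S z⟫ := q_nonneg S hpos z
      have hxA' : ⟪x, S x⟫ ≤ δ ^ 2 - l2 ∧ ∀ i, |x i| < 1 - 2*δ := hxA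
      obtain ⟨hxq, hxsup⟩ := hxA'
      rw [hqx] at hxq
      have hs2 : s ^ 2 ≤ δ ^ 2 := by linarith
      have habs_s : |s| ≤ δ := by
        calc |s| = Real.sqrt (s ^ 2) := (Real.sqrt_sq_eq_abs s).symm
          _ ≤ Real.sqrt (δ ^ 2) := Real.sqrt_le_sqrt hs2
          _ = δ := Real.sqrt_sq hδ.le
      have hβ2 : β ^ 2 ≤ δ ^ 2 := by rw [hβsq]; linarith [sq_nonneg s]
      have habs_β : |β| ≤ δ := by
        calc |β| = Real.sqrt (β ^ 2) := (Real.sqrt_sq_eq_abs β).symm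
          _ ≤ Real.sqrt (δ ^ 2) := Real.sqrt_le_sqrt hβ2
          _ = δ := Real.sqrt_sq hδ.le
      have hyB : y ∈ B := by
        have h1 : ⟪av, y⟫ = b := by
          rw [hydef, inner_add_right, inner_smul_right, havz, ht0, hβdef, zero_add,
            div_mul_cancel₀ _ ht0ne]
        have h2 : ⟪y, S y⟫ ≤ δ ^ 2 := by rw [hqy]; linarith [sq_nonneg s, hβsq]
        have h3 : ∀ i, |y i| < 1 := by
          intro i
          have hyx : y = x + (β - s) • nv := by rw [hydef, hzdef, sub_smul]; abel
          have hyi : y i = x i + (β - s) * nv i := by rw [hyx]; simp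
          rw [hyi]
          have hbs : |β - s| ≤ 2 * δ := by
            calc |β - s| ≤ |β| + |s| := abs_sub _ _
              _ ≤ 2 * δ := by linarith
          have hprod : |β - s| * |nv i| ≤ 2 * δ := by
            calc |β - s| * |nv i| ≤ |β - s| * 1 :=
                mul_le_mul_of_nonneg_left (hn_sup i) (abs_nonneg _)
              _ ≤ 2 * δ := by linarith
          calc |x i + (β - s) * nv i| ≤ |x i| + |β - s| * |nv i| := by
                rw [← abs_mul]; exact abs_add_le _ _
            _ < (1 - 2*δ) + 2 * δ := by
                have := hxsup i
                linarith
            _ = 1 := by ring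
        exact ⟨h1, h2, h3⟩
      have hyP : y = P (w + β • nt) := by
        apply φ.injective
        ext j
        refine Fin.cases ?_ ?_ j
        · have hL : φ y 0 = β * ν₀ := by
            rw [hydef, map_add, _root_.map_smul]
            have : (φ z + β • φ nv) 0 = φ z 0 + β * φ nv 0 := by simp
            rw [this, hz0, hφnv0, zero_add]
          have hR : φ (P (w + β • nt)) 0 = β * ν₀ := hΨ0 _
          rw [hL, hR]
        · intro j
          have hzsucc : φ z (Fin.succ j) = w j := by
            rw [hzdef, map_sub, _root_.map_smul]
            have : (φ x - s • φ nv) (Fin.succ j) = φ x (Fin.succ j) - s * φ nv (Fin.succ j) := by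
              simp
            rw [this, hxsucc j]
            have : φ nv (Fin.succ j) = nt j := rfl
            rw [this]; ring
          have hL : φ y (Fin.succ j) = w j + β * nt j := by
            rw [hydef, map_add, _root_.map_smul]
            have : (φ z + β • φ nv) (Fin.succ j) = φ z (Fin.succ j) + β * φ nv (Fin.succ j) := by
              simp
            rw [this, hzsucc]
          have hR : φ (P (w + β • nt)) (Fin.succ j) = w j + β * nt j := by
            rw [hPdef, hΨsucc]
            simp
          rw [hL, hR]
      have hu_mem : u ∈ Set.Icc (-(δ * |ν₀|)) (δ * |ν₀|) := by
        have habs_u : |u| ≤ δ * |ν₀| := by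
          rw [hu, abs_mul]
          exact mul_le_mul_of_nonneg_right habs_s (abs_nonneg _)
        exact abs_le.mp habs_u
      rw [Set.indicator_of_mem hxA, Set.indicator_of_mem hu_mem, one_mul, ← hyP,
        Set.indicator_of_mem hyB]
      calc g x = ENNReal.ofReal (Real.exp (-⟪x, S x⟫)) := rfl
        _ ≤ ENNReal.ofReal (Real.exp l2 * Real.exp (-⟪y, S y⟫)) := by
            refine ENNReal.ofReal_le_ofReal ?_
            rw [← Real.exp_add]
            refine Real.exp_le_exp.mpr ?_
            rw [hqx, hqy]
            have := sq_nonneg s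
            linarith [hβsq]
        _ = ENNReal.ofReal (Real.exp l2) * ENNReal.ofReal (Real.exp (-⟪y, S y⟫)) :=
            ENNReal.ofReal_mul (Real.exp_pos _).le
        _ = ENNReal.ofReal (Real.exp l2) * g y := rfl
    · rw [Set.indicator_of_notMem hxA]
      exact zero_le
  -- the lintegral chain
  set J : (Fin M → ℝ) → ℝ≥0∞ := fun w => B.indicator g (P w) with hJdef
  have hJ_meas : Measurable J := (hg_meas.indicator hB_m).comp hP_meas
  set K := ∫⁻ w, J w with hKdef
  set Rl := ∫⁻ y in B, g y ∂(μH[(M : ℝ)] :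
    Measure (EuclideanSpace ℝ (Fin (M+1)))) with hRldef
  set Rm : EuclideanSpace ℝ (Fin (M+1)) → (Fin M → ℝ) := fun y j => φ y (Fin.succ j)
    with hRmdef
  have hRm_meas : Measurable Rm :=
    measurable_pi_lambda _ fun j => (hcoord (Fin.succ j)).comp φ.continuous.measurable
  have hPRm : ∀ y : EuclideanSpace ℝ (Fin (M+1)), ⟪av, y⟫ = b → P (Rm y) = y := by
    intro y hy
    apply φ.injective
    ext j
    refine Fin.cases ?_ ?_ j
    · have hR : φ (P (Rm y)) 0 = β * ν₀ := hΨ0 _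
      have hL : φ y 0 = ‖av‖⁻¹ * b := by rw [hφ0, hy]
      rw [hR, hL, hβdef, hν₀def]
      field_simp
    · intro j
      have hR : φ (P (Rm y)) (Fin.succ j) = Rm y j := hΨsucc _ j
      rw [hR]
  have hRmP : ∀ w : Fin M → ℝ, Rm (P w) = w := by
    intro w
    funext j
    exact hΨsucc _ j
  have hRm_lip : LipschitzWith 1 Rm := by
    refine LipschitzWith.of_dist_le_mul fun y1 y2 => ?_
    rw [NNReal.coe_one, one_mul]
    refine (dist_pi_le_iff dist_nonneg).mpr fun j => ?_
    have h1 : Rm y1 j - Rm y2 j = φ (y1 - y2) (Fin.succ j) := by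
      rw [map_sub]; simp [hRmdef]
    rw [Real.dist_eq, h1]
    calc |φ (y1 - y2) (Fin.succ j)| ≤ ‖φ (y1 - y2)‖ := coord_le_norm _ _
      _ = ‖y1 - y2‖ := φ.norm_map _
      _ = dist y1 y2 := (dist_eq_norm _ _).symm
  have hvol : (volume : Measure (Fin M → ℝ)) = μH[(M : ℝ)] := by
    have h := hausdorffMeasure_pi_real (ι := Fin M)
    rw [Fintype.card_fin] at h
    exact h.symm
  have hmeasineq : (volume : Measure (Fin M → ℝ)).restrict (P ⁻¹' B)
      ≤ ((μH[(M : ℝ)] : Measure (EuclideanSpace ℝ (Fin (M+1)))).restrict B).map Rm := by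
    refine Measure.le_iff.mpr fun s hs => ?_
    have himg : s ∩ P ⁻¹' B = Rm '' (Rm ⁻¹' s ∩ B) := by
      ext w
      constructor
      · rintro ⟨hws, hwB⟩
        refine ⟨P w, ⟨?_, hwB⟩, hRmP w⟩
        rw [Set.mem_preimage, hRmP w]
        exact hws
      · rintro ⟨y, ⟨hys, hyB⟩, rfl⟩
        have hyb : ⟪av, y⟫ = b := hyB.1
        refine ⟨hys, ?_⟩
        rw [Set.mem_preimage, hPRm y hyb]
        exact hyB
    rw [Measure.restrict_apply hs, Measure.map_apply hRm_meas hs,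
      Measure.restrict_apply (hRm_meas hs), himg, hvol]
    refine le_trans (hRm_lip.hausdorffMeasure_image_le (by positivity) _) ?_
    simp
  have step8 : K ≤ Rl := by
    have h1 : ∀ w, J w = (P ⁻¹' B).indicator (fun w => g (P w)) w := by
      intro w
      have hJw : J w = B.indicator g (P w) := rfl
      rw [hJw]
      by_cases h : P w ∈ B
      · rw [Set.indicator_of_mem h, Set.indicator_of_mem (Set.mem_preimage.mpr h)]
      · rw [Set.indicator_of_notMem h, Set.indicator_of_notMem (s := P ⁻¹' B) (a := w) (fun hc => h (Set.mem_preimage.mp hc))]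
    calc K = ∫⁻ w, (P ⁻¹' B).indicator (fun w => g (P w)) w := by
          rw [hKdef]; exact lintegral_congr h1
      _ = ∫⁻ w in P ⁻¹' B, g (P w) := lintegral_indicator (hP_meas hB_m) _
      _ ≤ ∫⁻ w, g (P w)
          ∂(((μH[(M : ℝ)] : Measure (EuclideanSpace ℝ (Fin (M+1)))).restrict B).map Rm) :=
          lintegral_mono' hmeasineq le_rfl
      _ = ∫⁻ y, g (P (Rm y))
          ∂((μH[(M : ℝ)] : Measure (EuclideanSpace ℝ (Fin (M+1)))).restrict B) :=
          lintegral_map (hg_meas.comp hP_meas) hRm_meas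
      _ = ∫⁻ y in B, g y ∂(μH[(M : ℝ)] : Measure (EuclideanSpace ℝ (Fin (M+1)))) := by
          refine setLIntegral_congr_fun hB_m (fun y hy => ?_)
          have hyb : ⟪av, y⟫ = b := hy.1
          rw [hPRm y hyb]
      _ = Rl := hRldef.symm
  have hμHB : (μH[(M : ℝ)] : Measure (EuclideanSpace ℝ (Fin (M+1)))) B ≠ ⊤ := by
    set W : Set (Fin M → ℝ) :=
      Set.pi Set.univ (fun _ => Set.Icc (-(M+1 : ℝ)) (M+1 : ℝ)) with hWdef
    have hBsub : B ⊆ P '' W := by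
      intro y hy
      have hyb : ⟪av, y⟫ = b := hy.1
      have hysup : ∀ i, |y i| < 1 := hy.2.2
      refine ⟨Rm y, ?_, hPRm y hyb⟩
      intro j _
      have hnormy : ‖y‖ ≤ (M+1 : ℝ) := by
        rw [EuclideanSpace.norm_eq]
        calc Real.sqrt (∑ i, ‖y i‖ ^ 2) ≤ Real.sqrt (∑ _i : Fin (M+1), 1) := by
              refine Real.sqrt_le_sqrt (Finset.sum_le_sum fun i _ => ?_)
              have := (hysup i).le
              rw [Real.norm_eq_abs]
              nlinarith [abs_nonneg (y i)]
          _ ≤ (M+1 : ℝ) := by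
              rw [Finset.sum_const, Finset.card_univ, Fintype.card_fin]
              simp only [nsmul_eq_mul, mul_one]
              calc Real.sqrt ((M+1 : ℕ) : ℝ) ≤ Real.sqrt (((M+1 : ℝ)) ^ 2) := by
                    refine Real.sqrt_le_sqrt ?_
                    push_cast
                    nlinarith [Nat.cast_nonneg (α := ℝ) M]
                _ = (M+1 : ℝ) := Real.sqrt_sq (by positivity)
      have habsy : |Rm y j| ≤ (M+1 : ℝ) := by
        calc |Rm y j| = |φ y (Fin.succ j)| := rfl
          _ ≤ ‖φ y‖ := coord_le_norm _ _
          _ = ‖y‖ := φ.norm_map _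
          _ ≤ (M+1 : ℝ) := hnormy
      exact abs_le.mp habsy
    have hPlip : LipschitzWith (Real.toNNReal (M+1 : ℝ)) P := by
      refine LipschitzWith.of_dist_le_mul fun w1 w2 => ?_
      rw [Real.coe_toNNReal _ (by positivity)]
      have hdiff : P w1 - P w2 = Ψ (0, w1 - w2) := by
        apply φ.injective
        rw [map_sub]
        ext j
        refine Fin.cases ?_ ?_ j
        · have e1 : φ (P w1) 0 = β * ν₀ := hΨ0 _
          have e2 : φ (P w2) 0 = β * ν₀ := hΨ0 _
          have e3 : φ (Ψ ((0:ℝ), w1 - w2)) 0 = 0 := hΨ0 _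
          have e4 : (φ (P w1) - φ (P w2)) 0 = φ (P w1) 0 - φ (P w2) 0 := by simp
          rw [e4, e1, e2, e3, sub_self]
        · intro j
          have e1 : φ (P w1) (Fin.succ j) = w1 j := hΨsucc _ _
          have e2 : φ (P w2) (Fin.succ j) = w2 j := hΨsucc _ _
          have e3 : φ (Ψ ((0:ℝ), w1 - w2)) (Fin.succ j) = (w1 - w2) j := hΨsucc _ _
          have e4 : (φ (P w1) - φ (P w2)) (Fin.succ j)
              = φ (P w1) (Fin.succ j) - φ (P w2) (Fin.succ j) := by simp
          rw [e4, e1, e2, e3]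
          simp
      have hterm : ∀ j : Fin M, ‖φ (Ψ ((0:ℝ), w1 - w2)) (Fin.succ j)‖ ^ 2
          ≤ dist w1 w2 ^ 2 := by
        intro j
        have e3 : φ (Ψ ((0:ℝ), w1 - w2)) (Fin.succ j) = (w1 - w2) j := hΨsucc _ _
        rw [e3]
        have h1 : ‖(w1 - w2) j‖ = dist (w1 j) (w2 j) := by
          rw [Real.dist_eq, Real.norm_eq_abs, Pi.sub_apply]
        rw [h1]
        have h2 := dist_le_pi_dist w1 w2 j
        nlinarith [dist_nonneg (x := w1 j) (y := w2 j)]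
      rw [dist_eq_norm, hdiff]
      calc ‖Ψ ((0:ℝ), w1 - w2)‖
          = Real.sqrt (∑ i, ‖φ (Ψ ((0:ℝ), w1 - w2)) i‖ ^ 2) := by
            rw [← φ.norm_map (Ψ ((0:ℝ), w1 - w2)), EuclideanSpace.norm_eq]
        _ ≤ Real.sqrt ((M+1 : ℝ) ^ 2 * dist w1 w2 ^ 2) := by
            refine Real.sqrt_le_sqrt ?_
            rw [Fin.sum_univ_succ, hΨ0]
            have hsum : ∑ j : Fin M, ‖φ (Ψ ((0:ℝ), w1 - w2)) (Fin.succ j)‖ ^ 2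
                ≤ ∑ _j : Fin M, dist w1 w2 ^ 2 :=
              Finset.sum_le_sum fun j _ => hterm j
            rw [Finset.sum_const, Finset.card_univ, Fintype.card_fin, nsmul_eq_mul] at hsum
            have hd2 : (0:ℝ) ≤ dist w1 w2 ^ 2 := sq_nonneg _
            have hM : (M : ℝ) ≤ (M+1 : ℝ) ^ 2 := by nlinarith [Nat.cast_nonneg (α := ℝ) M]
            simp only [norm_zero]
            nlinarith [hsum, mul_le_mul_of_nonneg_right hM hd2]
        _ = (M+1 : ℝ) * dist w1 w2 := by
            rw [← mul_pow, Real.sqrt_sq (by positivity)]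
    have hWvol : (μH[(M : ℝ)] : Measure (Fin M → ℝ)) W ≠ ⊤ := by
      rw [← hvol, hWdef, volume_pi_pi]
      refine (ENNReal.prod_lt_top fun i _ => ?_).ne
      rw [Real.volume_Icc]
      exact ENNReal.ofReal_lt_top
    have hfin : (μH[(M : ℝ)] : Measure (EuclideanSpace ℝ (Fin (M+1)))) (P '' W) ≠ ⊤ := by
      refine ne_top_of_le_ne_top ?_
        (hPlip.hausdorffMeasure_image_le (show (0:ℝ) ≤ (M : ℝ) by positivity) W)
      exact ENNReal.mul_ne_top
        (ENNReal.rpow_ne_top_of_nonneg (by positivity) ENNReal.coe_ne_top) hWvol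
    exact ne_top_of_le_ne_top hfin (measure_mono hBsub)
  have hind_meas : Measurable (A.indicator g) := hg_meas.indicator hA_m
  set FΩ : (Fin (M+1) → ℝ) → ℝ≥0∞ := fun ω => A.indicator g (φ.symm (meq.symm ω)) with hFΩdef
  have hFΩ_meas : Measurable FΩ :=
    (hind_meas.comp φ.symm.continuous.measurable).comp meq.symm.measurable
  have main_l : ∫⁻ x in A, g x ≤
      ENNReal.ofReal (2 * (δ * |ν₀|)) * (ENNReal.ofReal (Real.exp l2) * Rl) := by
    have e1 : ∫⁻ x in A, g x = ∫⁻ x, A.indicator g x := (lintegral_indicator hA_m g).symm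
    have e2 : ∫⁻ x, A.indicator g x =
        ∫⁻ w, A.indicator g (φ.symm w) ∂(volume : Measure (EuclideanSpace ℝ (Fin (M+1)))) :=
      ((b0.measurePreserving_repr_symm).lintegral_comp hind_meas).symm
    have e3 : ∫⁻ w, A.indicator g (φ.symm w)
          ∂(volume : Measure (EuclideanSpace ℝ (Fin (M+1)))) =
        ∫⁻ ω, FΩ ω ∂(volume : Measure (Fin (M+1) → ℝ)) :=
      (((EuclideanSpace.volume_preserving_symm_measurableEquiv_toLp (Fin (M+1))).symm).lintegral_comp
        (hind_meas.comp φ.symm.continuous.measurable)).symm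
    have e4 : ∫⁻ ω, FΩ ω ∂(volume : Measure (Fin (M+1) → ℝ)) =
        ∫⁻ z, FΩ (pe.symm z) ∂((volume : Measure ℝ).prod (volume : Measure (Fin M → ℝ))) :=
      (((measurePreserving_piFinSuccAbove (fun _ : Fin (M+1) => (volume : Measure ℝ)) 0).symm).lintegral_comp
        hFΩ_meas).symm
    have e5 : ∫⁻ z, FΩ (pe.symm z) ∂((volume : Measure ℝ).prod (volume : Measure (Fin M → ℝ)))
        = ∫⁻ u, ∫⁻ w, FΩ (pe.symm (u, w)) := by
      exact lintegral_prod _ ((hFΩ_meas.comp pe.symm.measurable).aemeasurable)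
    have hFΨ : ∀ u (w : Fin M → ℝ), FΩ (pe.symm (u, w)) = A.indicator g (Ψ (u, w)) :=
      fun u w => rfl
    have e6 : ∀ u : ℝ, ∫⁻ w, FΩ (pe.symm (u, w))
        ≤ (Set.Icc (-(δ * |ν₀|)) (δ * |ν₀|)).indicator (fun _ => (1:ℝ≥0∞)) u
          * (ENNReal.ofReal (Real.exp l2) * K) := by
      intro u
      have t1 : ∫⁻ w, FΩ (pe.symm (u, w)) = ∫⁻ w, FΩ (pe.symm (u, w + (u / ν₀) • nt)) :=
        (lintegral_add_right_eq_self (fun w => FΩ (pe.symm (u, w))) ((u / ν₀) • nt)).symm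
      have t2 : ∫⁻ w, FΩ (pe.symm (u, w + (u / ν₀) • nt))
          ≤ ∫⁻ w, ((Set.Icc (-(δ * |ν₀|)) (δ * |ν₀|)).indicator (fun _ => (1:ℝ≥0∞)) u
            * ENNReal.ofReal (Real.exp l2)) * J (w + β • nt) := by
        refine lintegral_mono fun w => ?_
        rw [hFΨ]
        calc A.indicator g (Ψ (u, w + (u / ν₀) • nt))
            ≤ (Set.Icc (-(δ * |ν₀|)) (δ * |ν₀|)).indicator (fun _ => (1:ℝ≥0∞)) u
              * (ENNReal.ofReal (Real.exp l2) * B.indicator g (P (w + β • nt))) := key u w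
          _ = ((Set.Icc (-(δ * |ν₀|)) (δ * |ν₀|)).indicator (fun _ => (1:ℝ≥0∞)) u
              * ENNReal.ofReal (Real.exp l2)) * J (w + β • nt) := by
            rw [hJdef, mul_assoc]
      have t3 : ∫⁻ w, ((Set.Icc (-(δ * |ν₀|)) (δ * |ν₀|)).indicator (fun _ => (1:ℝ≥0∞)) u
            * ENNReal.ofReal (Real.exp l2)) * J (w + β • nt)
          = ((Set.Icc (-(δ * |ν₀|)) (δ * |ν₀|)).indicator (fun _ => (1:ℝ≥0∞)) u
            * ENNReal.ofReal (Real.exp l2)) * ∫⁻ w, J (w + β • nt) := by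
        exact lintegral_const_mul _ (hJ_meas.comp (measurable_id.add_const _))
      have t4 : ∫⁻ w, J (w + β • nt) = K :=
        lintegral_add_right_eq_self J (β • nt)
      rw [t1]
      refine t2.trans ?_
      rw [t3, t4, mul_assoc]
    have e7 : ∫⁻ u, ((Set.Icc (-(δ * |ν₀|)) (δ * |ν₀|)).indicator (fun _ => (1:ℝ≥0∞)) u
          * (ENNReal.ofReal (Real.exp l2) * K))
        = ENNReal.ofReal (2 * (δ * |ν₀|)) * (ENNReal.ofReal (Real.exp l2) * K) := by
      have : (fun u => (Set.Icc (-(δ * |ν₀|)) (δ * |ν₀|)).indicator (fun _ => (1:ℝ≥0∞)) u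
            * (ENNReal.ofReal (Real.exp l2) * K))
          = fun u => (Set.Icc (-(δ * |ν₀|)) (δ * |ν₀|)).indicator
            (fun _ => ENNReal.ofReal (Real.exp l2) * K) u := by
        funext u
        by_cases hu : u ∈ Set.Icc (-(δ * |ν₀|)) (δ * |ν₀|)
        · simp [Set.indicator_of_mem hu]
        · simp [Set.indicator_of_notMem hu]
      rw [this, lintegral_indicator_const measurableSet_Icc, Real.volume_Icc,
        show δ * |ν₀| - -(δ * |ν₀|) = 2 * (δ * |ν₀|) by ring, mul_comm]
    calc ∫⁻ x in A, g x = ∫⁻ u, ∫⁻ w, FΩ (pe.symm (u, w)) := by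
          rw [e1, e2, e3, e4, e5]
      _ ≤ ∫⁻ u, ((Set.Icc (-(δ * |ν₀|)) (δ * |ν₀|)).indicator (fun _ => (1:ℝ≥0∞)) u
            * (ENNReal.ofReal (Real.exp l2) * K)) := lintegral_mono e6
      _ = ENNReal.ofReal (2 * (δ * |ν₀|)) * (ENNReal.ofReal (Real.exp l2) * K) := e7
      _ ≤ ENNReal.ofReal (2 * (δ * |ν₀|)) * (ENNReal.ofReal (Real.exp l2) * Rl) := by
          gcongr
  -- conversion to Bochner integrals
  have hRl_fin : Rl ≠ ⊤ := by
    refine ne_top_of_le_ne_top ?_ (le_trans (lintegral_mono fun y => ?_) (le_of_eq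
      (setLIntegral_one B)))
    · simpa using hμHB
    · show g y ≤ 1
      rw [hgdef]
      calc ENNReal.ofReal (Real.exp (-⟪y, S y⟫)) ≤ ENNReal.ofReal 1 := by
            refine ENNReal.ofReal_le_ofReal ?_
            rw [← Real.exp_zero]
            exact Real.exp_le_exp.mpr (by simpa using q_nonneg S hpos y)
        _ = 1 := by simp
  have hLeq : ∫ x in A, Real.exp (-⟪x, S x⟫) = (∫⁻ x in A, g x).toReal := by
    rw [integral_eq_lintegral_of_nonneg_ae (ae_of_all _ fun x => (Real.exp_pos _).le)
      hexpcont.aestronglyMeasurable.restrict]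
  have hReq : ∫ x in B, Real.exp (-⟪x, S x⟫) ∂(μH[(M : ℝ)]) = Rl.toReal := by
    rw [hRldef, integral_eq_lintegral_of_nonneg_ae (ae_of_all _ fun x => (Real.exp_pos _).le)
      hexpcont.aestronglyMeasurable.restrict]
  rw [hLeq, hReq, hconst]
  have hfin2 : ENNReal.ofReal (2 * (δ * |ν₀|)) * (ENNReal.ofReal (Real.exp l2) * Rl) ≠ ⊤ :=
    ENNReal.mul_ne_top ENNReal.ofReal_ne_top (ENNReal.mul_ne_top ENNReal.ofReal_ne_top hRl_fin)
  calc (∫⁻ x in A, g x).toReal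
      ≤ (ENNReal.ofReal (2 * (δ * |ν₀|)) * (ENNReal.ofReal (Real.exp l2) * Rl)).toReal :=
        ENNReal.toReal_mono hfin2 main_l
    _ = 2 * δ * Real.exp l2 * |ν₀| * Rl.toReal := by
        rw [ENNReal.toReal_mul, ENNReal.toReal_mul, ENNReal.toReal_ofReal (by positivity),
          ENNReal.toReal_ofReal (Real.exp_pos _).le]
        ring

end Main

set_option maxHeartbeats 2000000 in
/-- The coarea/slicing estimate in a finite-dimensional Euclidean space:
for a positive definite symmetric form `Σ`, a linear form `a* = ⟨a,·⟩`, level `b`,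
`l² = inf{⟨x,Σx⟩ : a*(x) = b}` and the `Σ`-unit normal `n` to `{a* = 0}` with `‖n‖_∞ ≤ 1`,
the Gaussian-weighted volume of `B̃^{δ²-l²,1-2δ}` is bounded by
`2δ e^{l²} ⟨Σn,Σn⟩^{-1/2}` times the Gaussian-weighted Hausdorff measure of `B̃^{b,δ²,1}`;
together with the explicit formulas for `l²`, `n` and `⟨Σn,Σn⟩`. -/
theorem statement18 (N : ℕ) (hN : 0 < N)
    (S : EuclideanSpace ℝ (Fin N) →L[ℝ] EuclideanSpace ℝ (Fin N))
    (hsymm : ∀ x y : EuclideanSpace ℝ (Fin N), ⟪S x, y⟫ = ⟪x, S y⟫)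
    (hpos : ∀ x : EuclideanSpace ℝ (Fin N), x ≠ 0 → 0 < ⟪x, S x⟫)
    (av : EuclideanSpace ℝ (Fin N)) (hav : av ≠ 0) (b : ℝ)
    (a' : EuclideanSpace ℝ (Fin N)) (ha' : S a' = av)
    (nv : EuclideanSpace ℝ (Fin N))
    (hn_orth : ∀ x : EuclideanSpace ℝ (Fin N), ⟪av, x⟫ = 0 → ⟪nv, S x⟫ = 0)
    (hn_unit : ⟪nv, S nv⟫ = 1)
    (hn_sup : ∀ i, |nv i| ≤ 1)
    (δ : ℝ) (hδ : 0 < δ)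
    (l2 : ℝ) (hl2 : l2 = sInf {r : ℝ | ∃ x : EuclideanSpace ℝ (Fin N),
      ⟪av, x⟫ = b ∧ r = ⟪x, S x⟫}) :
    ((∫ x in {x : EuclideanSpace ℝ (Fin N) |
          ⟪x, S x⟫ ≤ δ ^ 2 - l2 ∧ ∀ i, |x i| < 1 - 2*δ},
        Real.exp (-⟪x, S x⟫)) ≤
      (2 * δ * Real.exp l2 / Real.sqrt ⟪S nv, S nv⟫) *
        ∫ x in {x : EuclideanSpace ℝ (Fin N) |
            ⟪av, x⟫ = b ∧ ⟪x, S x⟫ ≤ δ ^ 2 ∧ ∀ i, |x i| < 1},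
          Real.exp (-⟪x, S x⟫) ∂(μH[(N - 1 : ℝ)])) ∧
    (l2 = b ^ 2 / ⟪av, a'⟫) ∧
    (⟪av, a'⟫ = (sSup {r : ℝ | ∃ η : EuclideanSpace ℝ (Fin N),
        ⟪η, S η⟫ = 1 ∧ r = ⟪av, η⟫}) ^ 2) ∧
    (nv = (Real.sqrt ⟪av, a'⟫)⁻¹ • a' ∨ nv = -((Real.sqrt ⟪av, a'⟫)⁻¹ • a')) ∧
    (⟪S nv, S nv⟫ = (sSup {r : ℝ | ∃ η : EuclideanSpace ℝ (Fin N),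
        ‖η‖ = 1 ∧ r = ⟪av, η⟫}) ^ 2 / ⟪av, a'⟫) := by
  obtain ⟨M, rfl⟩ : ∃ M, N = M + 1 := ⟨N - 1, (Nat.succ_pred_eq_of_pos hN).symm⟩
  obtain ⟨c, hSnv, hnv, hc2⟩ := nv_structure S hsymm hpos av hav a' ha' nv hn_orth hn_unit
  have hp : 0 < ⟪av, a'⟫ := p_pos S hpos av hav a' ha'
  have hcne : c ≠ 0 := by
    intro h; rw [h] at hc2; simp at hc2
  set t0 : ℝ := c * ⟪av, a'⟫ with ht0def
  have ht0 : ⟪av, nv⟫ = t0 := by rw [hnv, inner_smul_right]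
  have ht0sq : t0 ^ 2 = ⟪av, a'⟫ := by rw [ht0def]; nlinarith
  have ht0ne : t0 ≠ 0 := by
    intro h; rw [h] at ht0sq; simp at ht0sq; nlinarith
  have hnorm_av : (0:ℝ) < ‖av‖ := norm_pos_iff.mpr hav
  refine ⟨?_, ?_, ?_, ?_, ?_⟩
  · -- part 1
    have hexp : ((M + 1 : ℕ) : ℝ) - 1 = (M : ℝ) := by push_cast; ring
    rw [hexp]
    exact part1 M S hsymm hpos av hav b a' ha' nv hn_orth hn_unit hn_sup δ hδ l2 hl2
  · -- part 2
    rw [hl2, part2 S hsymm hpos av nv hn_orth hn_unit ht0 ht0ne b, ht0sq]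
  · -- part 3
    rw [part3 S hsymm hpos av hav a' ha' hp, Real.sq_sqrt hp.le]
  · -- part 4
    have hsq : Real.sqrt ⟪av, a'⟫ = |c|⁻¹ := by
      have hpinv : ⟪av, a'⟫ = (c ^ 2)⁻¹ := eq_inv_of_mul_eq_one_right hc2
      have h1 : (|c|⁻¹) ^ 2 = ⟪av, a'⟫ := by
        rw [inv_pow, sq_abs, ← hpinv]
      rw [← h1, Real.sqrt_sq (by positivity)]
    rw [hsq, inv_inv]
    rcases abs_cases c with ⟨hca, _⟩ | ⟨hca, _⟩
    · left; rw [hnv, hca]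
    · right; rw [hnv, ← neg_smul, hca, neg_neg]
  · -- part 5
    rw [part5sup av hav]
    have hSnvSnv : ⟪S nv, S nv⟫ = c ^ 2 * ‖av‖ ^ 2 := by
      rw [hSnv, inner_smul_left, inner_smul_right, real_inner_self_eq_norm_sq]
      simp only [RCLike.star_def, starRingEnd_apply, star_trivial]
      ring
    rw [hSnvSnv, eq_div_iff hp.ne']
    linear_combination ‖av‖ ^ 2 * hc2


end
end
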